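/- arXiv:1008.1754 — 9 statements merged into one kernel-verified Lean document; each statement's English description precedes it below -/
import Mathlib

section
/- Let X and Y be independent non-negative random variables with Y ∈ (0,1) almost surely, and suppose the survival function of X is slowly varying at infinity (i.e. P[X>cx]/P[X>x] → 1 as x→∞ for all c>0). Then P[XY>x]/P[X>x] → 1 as x → ∞. -/
/-!
Since `X ≥ 0` and `Y < 1`, `XY > x` forces `X > x`, so the ratio is at most `1`. Conversely,
for `δ > 0` independence gives `P[XY > x] ≥ P[X > x / δ] P[Y > δ]`, and slow variation makes
`P[X > x / δ] / P[X > x] → 1`; hence the ratio is eventually above any `b < P[Y > δ]`, and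
`P[Y > δ] → 1` as `δ → 0` because `Y > 0` almost surely.
-/

open MeasureTheory ProbabilityTheory Filter Set Topology

section

variable {Ω : Type*} [MeasurableSpace Ω] {μ : Measure Ω} {X Y : Ω → ℝ}

lemma measure_lt_mul_le_measure_lt (hX : ∀ᵐ ω ∂μ, 0 ≤ X ω) (hY : ∀ᵐ ω ∂μ, Y ω ≤ 1) (x : ℝ) :
    μ {ω | x < X ω * Y ω} ≤ μ {ω | x < X ω} := by
  refine measure_mono_ae ?_
  filter_upwards [hX, hY] with ω hXω hYω hω
  exact hω.trans_le (mul_le_of_le_one_right hXω hYω)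

lemma ProbabilityTheory.IndepFun.measure_inv_mul_lt_mul_measure_lt_le (hXY : IndepFun X Y μ)
    {δ x : ℝ} (hδ : 0 < δ) (hx : 0 ≤ x) :
    μ {ω | δ⁻¹ * x < X ω} * μ {ω | δ < Y ω} ≤ μ {ω | x < X ω * Y ω} := by
  refine (hXY.measure_inter_preimage_eq_mul (Ioi (δ⁻¹ * x)) (Ioi δ) measurableSet_Ioi
    measurableSet_Ioi).symm.trans_le (measure_mono fun ω ⟨hXω, hYω⟩ => ?_)
  have hXω : x < δ * X ω := by rwa [mem_preimage, mem_Ioi, inv_mul_lt_iff₀ hδ] at hXω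
  have hXpos : 0 < X ω := pos_of_mul_pos_right (hx.trans_lt hXω) hδ.le
  calc x < δ * X ω := hXω
    _ < Y ω * X ω := mul_lt_mul_of_pos_right hYω hXpos
    _ = X ω * Y ω := mul_comm _ _

lemma tendsto_measure_inv_succ_lt (hY : ∀ᵐ ω ∂μ, 0 < Y ω) :
    Tendsto (fun n : ℕ => μ {ω | ((n : ℝ) + 1)⁻¹ < Y ω}) atTop (𝓝 (μ univ)) := by
  have hmono : Monotone fun n : ℕ => {ω | ((n : ℝ) + 1)⁻¹ < Y ω} := fun n m hnm ω hω =>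
    (inv_anti₀ (by positivity) (by gcongr : (n : ℝ) + 1 ≤ m + 1)).trans_lt hω
  have hunion : (⋃ n : ℕ, {ω | ((n : ℝ) + 1)⁻¹ < Y ω}) = {ω | 0 < Y ω} := by
    ext ω
    simp only [mem_iUnion, mem_ofPred_eq]
    refine ⟨fun ⟨n, hn⟩ => lt_trans (by positivity) hn, fun h => ?_⟩
    simpa only [one_div] using exists_nat_one_div_lt h
  have hfull : μ {ω | 0 < Y ω} = μ univ := measure_congr (ae_eq_univ.2 (ae_iff.1 hY))
  rw [← hfull, ← hunion]
  exact tendsto_measure_iUnion_atTop hmono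

end

theorem breiman_slowly_varying_general
    {Ω : Type*} [MeasureSpace Ω] [IsProbabilityMeasure (ℙ : Measure Ω)]
    (X Y : Ω → ℝ)
    (hX0 : ∀ᵐ ω ∂ℙ, 0 ≤ X ω) (hY01 : ∀ᵐ ω ∂ℙ, Y ω ∈ Set.Ioo (0:ℝ) 1)
    (hInd : IndepFun X Y ℙ)
    (hSV : ∀ c > (0:ℝ), Tendsto
      (fun x => (ℙ {ω | c * x < X ω}).toReal / (ℙ {ω | x < X ω}).toReal)
      atTop (nhds 1)) :
    Tendsto (fun x => (ℙ {ω | x < X ω * Y ω}).toReal / (ℙ {ω | x < X ω}).toReal)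
      atTop (nhds 1) := by
  refine tendsto_order.2 ⟨fun b hb => ?_, fun b hb => .of_forall fun x => ?_⟩
  · have hYlim := (ENNReal.tendsto_toReal ENNReal.one_ne_top).comp <|
      measure_univ (μ := (ℙ : Measure Ω)) ▸ tendsto_measure_inv_succ_lt (hY01.mono fun _ h => h.1)
    obtain ⟨n, hn⟩ := (hYlim.eventually (eventually_gt_nhds hb)).exists
    set δ : ℝ := ((n : ℝ) + 1)⁻¹
    have hδ : 0 < δ := by positivity
    have hXlim := (hSV δ⁻¹ (inv_pos.2 hδ)).mul_const (ℙ {ω | δ < Y ω}).toReal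
    rw [one_mul] at hXlim
    filter_upwards [hXlim.eventually (eventually_gt_nhds hn), eventually_ge_atTop 0]
      with x hx hx0
    refine hx.trans_le ?_
    rw [div_mul_eq_mul_div, ← ENNReal.toReal_mul]
    exact div_le_div_of_nonneg_right (ENNReal.toReal_mono (measure_ne_top _ _)
      (hInd.measure_inv_mul_lt_mul_measure_lt_le hδ hx0)) ENNReal.toReal_nonneg
  · refine (div_le_one_of_le₀ ?_ ENNReal.toReal_nonneg).trans_lt hb
    exact ENNReal.toReal_mono (measure_ne_top _ _)
      (measure_lt_mul_le_measure_lt hX0 (hY01.mono fun _ h => h.2.le) x)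

theorem breiman_slowly_varying
    {Ω : Type*} [MeasureSpace Ω] [IsProbabilityMeasure (ℙ : Measure Ω)]
    (X Y : Ω → ℝ) (hXm : Measurable X) (hYm : Measurable Y)
    (hX0 : ∀ᵐ ω ∂ℙ, 0 ≤ X ω) (hY01 : ∀ᵐ ω ∂ℙ, Y ω ∈ Set.Ioo (0:ℝ) 1)
    (hInd : IndepFun X Y ℙ)
    (hSV : ∀ c > (0:ℝ), Tendsto
      (fun x => (ℙ {ω | c * x < X ω}).toReal / (ℙ {ω | x < X ω}).toReal)
      atTop (nhds 1)) :
    Tendsto (fun x => (ℙ {ω | x < X ω * Y ω}).toReal / (ℙ {ω | x < X ω}).toReal)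
      atTop (nhds 1) :=
  breiman_slowly_varying_general X Y hX0 hY01 hInd hSV
end

section
/- Let X and Y be independent non-negative random variables with Y ∈ (0,1) almost surely, and suppose the survival function of X is rapidly varying at infinity (index −∞), i.e. P[X>cx]/P[X>x] → 0 for every c>1. Then P[XY>x]/P[X>x] → 0 as x → ∞. -/
/-!
For `c > 1`, on the event `{X * Y > x}` either `X > c x`, or `x < X ≤ c x` and then `Y > 1 / c`.
Independence turns the second case into `P[X > x] P[Y > 1 / c]`, so
`P[X Y > x] / P[X > x] ≤ P[X > c x] / P[X > x] + P[Y > 1 / c]`.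
The first term vanishes as `x → ∞` by rapid variation, and the second tends to
`P[Y ≥ 1] = 0` as `c → 1⁺`.
-/

open MeasureTheory ProbabilityTheory Filter Set Topology

theorem tendsto_zero_of_le_add_of_tendsto {α β : Type*} {l : Filter α} {L : Filter β} [L.NeBot]
    {f : α → ℝ} {g : β → α → ℝ} {p : β → ℝ} (hf : ∀ x, 0 ≤ f x)
    (hg : ∀ᶠ b in L, Tendsto (g b) l (𝓝 0)) (hp : Tendsto p L (𝓝 0))
    (hfg : ∀ᶠ b in L, ∀ x, f x ≤ g b x + p b) :
    Tendsto f l (𝓝 0) := by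
  refine Metric.tendsto_nhds.2 fun ε hε => ?_
  obtain ⟨b, hgb, hpb, hfgb⟩ :=
    (hg.and ((hp.eventually (gt_mem_nhds (half_pos hε))).and hfg)).exists
  filter_upwards [(hgb.eventually (gt_mem_nhds (half_pos hε)))] with x hx
  rw [Real.dist_0_eq_abs, abs_of_nonneg (hf x)]
  linarith [hfgb x]

theorem div_le_div_add_of_le_add_mul {a b d e : ℝ} (hd : 0 ≤ d) (he : 0 ≤ e)
    (h : a ≤ b + d * e) : a / d ≤ b / d + e := by
  rcases hd.eq_or_lt with rfl | hd
  · simpa using he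
  · rw [div_add' _ _ _ hd.ne', div_le_div_iff_of_pos_right hd, mul_comm e]
    exact h

theorem lt_mul_or_of_lt_mul {X Y c x : ℝ} (hX : 0 ≤ X) (hY : Y ≤ 1) (hc : 0 < c)
    (h : x < X * Y) : c * x < X ∨ x < X ∧ c⁻¹ < Y := by
  refine (lt_or_ge (c * x) X).imp_right fun hXc =>
    ⟨h.trans_le (mul_le_of_le_one_right hX hY), ?_⟩
  have : X * c⁻¹ ≤ x := by rwa [← div_eq_mul_inv, div_le_iff₀' hc]
  exact lt_of_mul_lt_mul_left (this.trans_lt h) hX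

section Breiman

variable {Ω : Type*} [MeasurableSpace Ω] {μ : Measure Ω} {X Y : Ω → ℝ}

theorem measure_lt_mul_le (hX : ∀ᵐ ω ∂μ, 0 ≤ X ω) (hY : ∀ᵐ ω ∂μ, Y ω ≤ 1)
    (hXY : IndepFun X Y μ) {c : ℝ} (hc : 0 < c) (x : ℝ) :
    μ {ω | x < X ω * Y ω} ≤
      μ {ω | c * x < X ω} + μ {ω | x < X ω} * μ {ω | c⁻¹ < Y ω} := by
  have hsub : {ω | x < X ω * Y ω} ≤ᵐ[μ]
      ({ω | c * x < X ω} ∪ ({ω | x < X ω} ∩ {ω | c⁻¹ < Y ω}) : Set Ω) := by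
    filter_upwards [hX, hY] with ω hXω hYω
    exact lt_mul_or_of_lt_mul hXω hYω hc
  calc μ {ω | x < X ω * Y ω}
      ≤ μ ({ω | c * x < X ω} ∪ ({ω | x < X ω} ∩ {ω | c⁻¹ < Y ω})) :=
        measure_mono_ae hsub
    _ ≤ μ {ω | c * x < X ω} + μ ({ω | x < X ω} ∩ {ω | c⁻¹ < Y ω}) :=
        measure_union_le _ _
    _ = μ {ω | c * x < X ω} + μ {ω | x < X ω} * μ {ω | c⁻¹ < Y ω} := by
      congr 1
      exact hXY.measure_inter_preimage_eq_mul _ _ measurableSet_Ioi measurableSet_Ioi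

theorem measure_lt_mul_div_le [IsFiniteMeasure μ] (hX : ∀ᵐ ω ∂μ, 0 ≤ X ω)
    (hY : ∀ᵐ ω ∂μ, Y ω ≤ 1) (hXY : IndepFun X Y μ) {c : ℝ} (hc : 0 < c) (x : ℝ) :
    (μ {ω | x < X ω * Y ω}).toReal / (μ {ω | x < X ω}).toReal ≤
      (μ {ω | c * x < X ω}).toReal / (μ {ω | x < X ω}).toReal +
        (μ {ω | c⁻¹ < Y ω}).toReal := by
  refine div_le_div_add_of_le_add_mul ENNReal.toReal_nonneg ENNReal.toReal_nonneg ?_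
  rw [← ENNReal.toReal_mul, ← ENNReal.toReal_add (by finiteness) (by finiteness)]
  exact ENNReal.toReal_mono (by finiteness) (measure_lt_mul_le hX hY hXY hc x)

theorem tendsto_measure_inv_lt_nhdsGT_one [IsFiniteMeasure μ] (hYm : Measurable Y)
    (hY : ∀ᵐ ω ∂μ, Y ω < 1) :
    Tendsto (fun c : ℝ => μ {ω | c⁻¹ < Y ω}) (𝓝[>] 1) (𝓝 0) := by
  have hinv : Tendsto (fun c : ℝ => c⁻¹) (𝓝[>] 1) (𝓝 1) := by
    simpa using (continuousAt_inv₀ (one_ne_zero' ℝ)).tendsto.mono_left nhdsWithin_le_nhds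
  have hinter : ⋂ c > (1 : ℝ), {ω | c⁻¹ < Y ω} ⊆ {ω | ¬ Y ω < 1} := fun ω hω =>
    not_lt.2 <| le_of_tendsto hinv <| eventually_nhdsWithin_of_forall fun c hc =>
      (mem_iInter₂.1 hω c hc).le
  have hmono : ∀ i j : ℝ, 1 < i → i ≤ j → {ω | i⁻¹ < Y ω} ⊆ {ω | j⁻¹ < Y ω} :=
    fun i j hi hij ω hω => (inv_anti₀ (zero_lt_one.trans hi) hij).trans_lt hω
  have := tendsto_measure_biInter_gt (μ := μ) (s := fun c : ℝ => {ω | c⁻¹ < Y ω})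
    (fun c _ => (hYm measurableSet_Ioi).nullMeasurableSet) hmono ⟨2, one_lt_two, by finiteness⟩
  rwa [measure_mono_null hinter (ae_iff.1 hY)] at this

end Breiman

theorem breiman_rapidly_varying_general
    {Ω : Type*} [MeasureSpace Ω] [IsProbabilityMeasure (ℙ : Measure Ω)]
    (X Y : Ω → ℝ) (hYm : Measurable Y)
    (hX0 : ∀ᵐ ω ∂ℙ, 0 ≤ X ω) (hY01 : ∀ᵐ ω ∂ℙ, Y ω ∈ Set.Ioo (0:ℝ) 1)
    (hInd : IndepFun X Y ℙ)
    (hSV : ∀ c > (1:ℝ), Tendsto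
      (fun x => (ℙ {ω | c * x < X ω}).toReal / (ℙ {ω | x < X ω}).toReal)
      atTop (nhds 0)) :
    Tendsto (fun x => (ℙ {ω | x < X ω * Y ω}).toReal / (ℙ {ω | x < X ω}).toReal)
      atTop (nhds 0) := by
  have hY1 : ∀ᵐ ω ∂ℙ, Y ω < 1 := hY01.mono fun _ h => h.2
  have hYtail : Tendsto (fun c : ℝ => (ℙ {ω | c⁻¹ < Y ω}).toReal) (𝓝[>] 1) (𝓝 0) :=
    (ENNReal.tendsto_toReal_zero_iff).2 (tendsto_measure_inv_lt_nhdsGT_one hYm hY1)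
  refine tendsto_zero_of_le_add_of_tendsto (L := 𝓝[>] (1 : ℝ))
    (fun _ => div_nonneg ENNReal.toReal_nonneg ENNReal.toReal_nonneg)
    (eventually_nhdsWithin_of_forall hSV) hYtail (eventually_nhdsWithin_of_forall fun c hc => ?_)
  exact measure_lt_mul_div_le hX0 (hY1.mono fun _ h => h.le) hInd (zero_lt_one.trans hc)

theorem breiman_rapidly_varying
    {Ω : Type*} [MeasureSpace Ω] [IsProbabilityMeasure (ℙ : Measure Ω)]
    (X Y : Ω → ℝ) (hXm : Measurable X) (hYm : Measurable Y)
    (hX0 : ∀ᵐ ω ∂ℙ, 0 ≤ X ω) (hY01 : ∀ᵐ ω ∂ℙ, Y ω ∈ Set.Ioo (0:ℝ) 1)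
    (hInd : IndepFun X Y ℙ)
    (hSV : ∀ c > (1:ℝ), Tendsto
      (fun x => (ℙ {ω | c * x < X ω}).toReal / (ℙ {ω | x < X ω}).toReal)
      atTop (nhds 0)) :
    Tendsto (fun x => (ℙ {ω | x < X ω * Y ω}).toReal / (ℙ {ω | x < X ω}).toReal)
      atTop (nhds 0) :=
  breiman_rapidly_varying_general X Y hYm hX0 hY01 hInd hSV
end

section
/- Let X be a non-negative random variable with distribution function F and Y an independent Beta(1, d−1) random variable. Then the Williamson d-transform of F equals the survival function of the product XY: W_d F(x) = P[XY > x] for all x > 0. -/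
open MeasureTheory ProbabilityTheory Filter Set

/-!
Conditioning on `X = t`, the event `x < t Y` has probability `P[Y > x / t] = (1 - x / t)^(d - 1)`
for `t > x` and `0` otherwise, since the Beta(1, d - 1) tail is `P[Y > c] = (1 - c)^(d - 1)`.
Independence turns `P[XY > x]` into the integral of this conditional probability against the law
of `X`, which is the Williamson transform.
-/

theorem ProbabilityTheory.IndepFun.measure_preimage_prodMk_eq_lintegral {Ω α β : Type*}
    [MeasurableSpace Ω] [MeasurableSpace α] [MeasurableSpace β] {μ : Measure Ω} [IsFiniteMeasure μ]
    {X : Ω → α} {Y : Ω → β} (hX : Measurable X) (hY : Measurable Y) (hXY : IndepFun X Y μ)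
    {s : Set (α × β)} (hs : MeasurableSet s) :
    μ ((fun ω => (X ω, Y ω)) ⁻¹' s) = ∫⁻ a, μ.map Y (Prod.mk a ⁻¹' s) ∂μ.map X := by
  rw [← Measure.map_apply (hX.prodMk hY) hs,
    (indepFun_iff_map_prod_eq_prod_map_map hX.aemeasurable hY.aemeasurable).mp hXY,
    Measure.prod_apply hs]

noncomputable def williamsonKernel (d : ℕ) (x t : ℝ) : ℝ :=
  if x < t then (1 - x / t) ^ (d - 1) else 0

theorem williamsonKernel_nonneg {d : ℕ} {x : ℝ} (hx : 0 ≤ x) (t : ℝ) :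
    0 ≤ williamsonKernel d x t := by
  unfold williamsonKernel
  split_ifs with hxt
  · exact pow_nonneg (sub_nonneg.mpr ((div_le_one (hx.trans_lt hxt)).mpr hxt.le)) _
  · exact le_rfl

theorem measurable_williamsonKernel (d : ℕ) (x : ℝ) : Measurable (williamsonKernel d x) :=
  Measurable.ite (measurableSet_lt measurable_const measurable_id) (by fun_prop) measurable_const

/-- The Beta(1, d - 1) law. -/
noncomputable def betaOneMeasure (d : ℕ) : Measure ℝ :=
  volume.withDensity (fun y => ENNReal.ofReal (Set.indicator (Set.Ioo (0:ℝ) 1)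
    (fun y => (d - 1 : ℝ) * (1 - y) ^ (d - 2)) y))

section BetaOne

variable {d : ℕ}

theorem intervalIntegral_betaOne_density (hd : 2 ≤ d) (c : ℝ) :
    ∫ y in c..1, (d - 1 : ℝ) * (1 - y) ^ (d - 2) = (1 - c) ^ (d - 1) := by
  obtain ⟨n, rfl⟩ : ∃ n, d = n + 2 := ⟨d - 2, by omega⟩
  have hcoeff : ((n + 2 : ℕ) - 1 : ℝ) = n + 1 := by push_cast; ring
  calc ∫ y in c..1, ((n + 2 : ℕ) - 1 : ℝ) * (1 - y) ^ (n + 2 - 2)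
      = ∫ u in (1 - 1 : ℝ)..(1 - c), ((n : ℝ) + 1) * u ^ n := by
        rw [hcoeff, Nat.add_sub_cancel,
          intervalIntegral.integral_comp_sub_left (fun u => ((n : ℝ) + 1) * u ^ n)]
    _ = (1 - c) ^ (n + 2 - 1) := by
        rw [intervalIntegral.integral_const_mul, integral_pow]
        field_simp
        simp

theorem setLIntegral_Ioo_betaOne_density (hd : 2 ≤ d) {c : ℝ} (hc : c ≤ 1) :
    ∫⁻ y in Ioo c 1, ENNReal.ofReal ((d - 1 : ℝ) * (1 - y) ^ (d - 2)) =
      ENNReal.ofReal ((1 - c) ^ (d - 1)) := by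
  have hd' : (0 : ℝ) ≤ d - 1 := by
    have : (2 : ℝ) ≤ d := by exact_mod_cast hd
    linarith
  have hnonneg : 0 ≤ᵐ[volume.restrict (Ioo c 1)] fun y => (d - 1 : ℝ) * (1 - y) ^ (d - 2) :=
    ae_restrict_of_forall_mem measurableSet_Ioo fun y hy =>
      mul_nonneg hd' (pow_nonneg (by linarith [hy.2]) _)
  have hint : IntegrableOn (fun y => (d - 1 : ℝ) * (1 - y) ^ (d - 2)) (Ioo c 1) :=
    (Continuous.integrableOn_Icc (by fun_prop)).mono_set Ioo_subset_Icc_self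
  rw [← ofReal_integral_eq_lintegral_ofReal hint hnonneg, ← integral_Ioc_eq_integral_Ioo,
    ← intervalIntegral.integral_of_le hc, intervalIntegral_betaOne_density hd]

theorem Ioo_inter_setOf_lt_mul {x : ℝ} (hx : 0 < x) (a : ℝ) :
    Ioo 0 1 ∩ {y | x < a * y} = if x < a then Ioo (x / a) 1 else ∅ := by
  ext y
  simp only [mem_inter_iff, mem_Ioo, mem_ofPred_eq]
  split_ifs with hxa
  · have ha : 0 < a := hx.trans hxa
    simp only [mem_Ioo, div_lt_iff₀ ha]
    constructor
    · rintro ⟨⟨-, hy1⟩, hxy⟩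
      exact ⟨by linarith, hy1⟩
    · rintro ⟨hxy, hy1⟩
      exact ⟨⟨pos_of_mul_pos_left (hx.trans (by linarith)) ha.le, hy1⟩, by linarith⟩
  · simp only [mem_empty_iff_false, iff_false, not_and]
    rintro ⟨hy0, hy1⟩ hxy
    rcases le_or_gt a 0 with ha | ha <;> nlinarith

theorem betaOneMeasure_setOf_lt_mul (hd : 2 ≤ d) {x : ℝ} (hx : 0 < x) (a : ℝ) :
    betaOneMeasure d {y | x < a * y} = ENNReal.ofReal (williamsonKernel d x a) := by
  have hdensity : (fun y => ENNReal.ofReal (Set.indicator (Ioo (0:ℝ) 1)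
      (fun y => (d - 1 : ℝ) * (1 - y) ^ (d - 2)) y)) =
      (Ioo 0 1).indicator fun y => ENNReal.ofReal ((d - 1 : ℝ) * (1 - y) ^ (d - 2)) :=
    funext fun y => (indicator_comp_of_zero ENNReal.ofReal_zero).symm ▸ rfl
  rw [betaOneMeasure, withDensity_apply' _ _, hdensity, lintegral_indicator measurableSet_Ioo,
    Measure.restrict_restrict measurableSet_Ioo, Ioo_inter_setOf_lt_mul hx, williamsonKernel]
  split_ifs with hxa
  · exact setLIntegral_Ioo_betaOne_density hd ((div_le_one (hx.trans hxa)).mpr hxa.le)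
  · simp

end BetaOne

theorem williamson_transform_eq_survival_of_beta_mixture_general
    {Ω : Type*} [MeasureSpace Ω] [IsProbabilityMeasure (ℙ : Measure Ω)]
    (d : ℕ) (hd : 2 ≤ d)
    (X Y : Ω → ℝ) (hXm : Measurable X) (hYm : Measurable Y)
    (hInd : IndepFun X Y ℙ)
    (hY : Measure.map Y ℙ = volume.withDensity (fun y =>
      ENNReal.ofReal (Set.indicator (Set.Ioo (0:ℝ) 1)
        (fun y => (d - 1 : ℝ) * (1 - y) ^ (d - 2)) y))) :
    ∀ x > (0:ℝ),
      (∫ ω, (if x < X ω then (1 - x / X ω) ^ (d - 1) else 0) ∂ℙ) =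
        (ℙ {ω | x < X ω * Y ω}).toReal := by
  intro x hx
  have hmass (a : ℝ) :
      (ℙ : Measure Ω).map Y {y | x < a * y} = ENNReal.ofReal (williamsonKernel d x a) :=
    hY ▸ betaOneMeasure_setOf_lt_mul hd hx a
  calc (∫ ω, (if x < X ω then (1 - x / X ω) ^ (d - 1) else 0) ∂ℙ)
      = ∫ t, williamsonKernel d x t ∂(ℙ : Measure Ω).map X :=
        (integral_map hXm.aemeasurable
          (measurable_williamsonKernel d x).aestronglyMeasurable).symm
    _ = (∫⁻ t, ENNReal.ofReal (williamsonKernel d x t) ∂(ℙ : Measure Ω).map X).toReal :=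
        integral_eq_lintegral_of_nonneg_ae (ae_of_all _ (williamsonKernel_nonneg hx.le))
          (measurable_williamsonKernel d x).aestronglyMeasurable
    _ = (ℙ {ω | x < X ω * Y ω}).toReal := by
        rw [← funext hmass]
        exact congrArg ENNReal.toReal (hInd.measure_preimage_prodMk_eq_lintegral hXm hYm
          (s := {p | x < p.1 * p.2})
          (measurableSet_lt measurable_const (measurable_fst.mul measurable_snd))).symm

theorem williamson_transform_eq_survival_of_beta_mixture
    {Ω : Type*} [MeasureSpace Ω] [IsProbabilityMeasure (ℙ : Measure Ω)]
    (d : ℕ) (hd : 2 ≤ d)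
    (X Y : Ω → ℝ) (hXm : Measurable X) (hYm : Measurable Y)
    (hX0 : ∀ᵐ ω ∂ℙ, 0 ≤ X ω)
    (hInd : IndepFun X Y ℙ)
    (hY : Measure.map Y ℙ = volume.withDensity (fun y =>
      ENNReal.ofReal (Set.indicator (Set.Ioo (0:ℝ) 1)
        (fun y => (d - 1 : ℝ) * (1 - y) ^ (d - 2)) y))) :
    ∀ x > (0:ℝ),
      (∫ ω, (if x < X ω then (1 - x / X ω) ^ (d - 1) else 0) ∂ℙ) =
        (ℙ {ω | x < X ω * Y ω}).toReal :=
  williamson_transform_eq_survival_of_beta_mixture_general d hd X Y hXm hYm hInd hY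
end

section
/- Let X = R·S be ℓ₁-norm symmetric with R > 0 a.s. Then the joint survival function of X satisfies P[X > x] = ψ(x_1 + ... + x_d) for all x ∈ ℝ_+^d, where ψ(t) = P[R S_1 > t], with S_1 the first coordinate of S. -/
/-!
For fixed `r > 0`, both `{∀ i, x i < r * S i}` and `{t < r * S 0}` (with `t = ∑ i, x i`) are,
up to a null set, survival events of `S` at points of `ℓ₁`-norm `t / r`: the first at `x / r`,
the second at `(t / r) • e₀`, because `S > 0` almost surely. So they have the same probability
`(1 - t / r)₊ ^ (d - 1)`. By independence of `R` and `S` the two probabilities for `R * S` are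
the integrals of these conditional probabilities against the law of `R > 0`, hence equal.
-/

open MeasureTheory ProbabilityTheory Filter Set

section

variable {Ω α β ι : Type*} {mΩ : MeasurableSpace Ω} {mα : MeasurableSpace α}
  {mβ : MeasurableSpace β} {μ : Measure Ω}

theorem ProbabilityTheory.IndepFun.measure_preimage_eq_of_ae_sections_eq [IsFiniteMeasure μ]
    {X : Ω → α} {Y : Ω → β} (hX : Measurable X) (hY : Measurable Y) (hXY : IndepFun X Y μ)
    {A B : Set (α × β)} (hA : MeasurableSet A) (hB : MeasurableSet B)
    (h : ∀ᵐ a ∂μ.map X, μ (Y ⁻¹' (Prod.mk a ⁻¹' A)) = μ (Y ⁻¹' (Prod.mk a ⁻¹' B))) :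
    μ ((fun ω ↦ (X ω, Y ω)) ⁻¹' A) = μ ((fun ω ↦ (X ω, Y ω)) ⁻¹' B) := by
  have hmap := (indepFun_iff_map_prod_eq_prod_map_map hX.aemeasurable hY.aemeasurable).1 hXY
  rw [← Measure.map_apply (hX.prodMk hY) hA, ← Measure.map_apply (hX.prodMk hY) hB, hmap,
    Measure.prod_apply hA, Measure.prod_apply hB]
  refine lintegral_congr_ae ?_
  filter_upwards [h] with a ha
  rwa [Measure.map_apply hY (measurable_prodMk_left hA),
    Measure.map_apply hY (measurable_prodMk_left hB)]

theorem measure_lt_apply_eq_measure_forall_single_lt [DecidableEq ι] {S : Ω → ι → ℝ}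
    (hpos : ∀ᵐ ω ∂μ, ∀ i, 0 < S ω i) (s : ℝ) (i₀ : ι) :
    μ {ω | s < S ω i₀} = μ {ω | ∀ i, (Pi.single i₀ s : ι → ℝ) i < S ω i} := by
  refine measure_congr (eventuallyEq_set.2 ?_)
  filter_upwards [hpos] with ω hω
  refine ⟨fun h i ↦ ?_, fun h ↦ by simpa using h i₀⟩
  rcases eq_or_ne i i₀ with rfl | hi
  · simpa using h
  · simpa [hi] using hω i

theorem measure_forall_lt_mul_eq_measure_sum_lt [IsFiniteMeasure μ] [Fintype ι] [DecidableEq ι]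
    {S : Ω → ι → ℝ} {G : ℝ → ℝ}
    (hS : ∀ x : ι → ℝ, (∀ i, 0 ≤ x i) → (μ {ω | ∀ i, x i < S ω i}).toReal = G (∑ i, x i))
    (hpos : ∀ᵐ ω ∂μ, ∀ i, 0 < S ω i) {r : ℝ} (hr : 0 < r) {x : ι → ℝ} (hx : ∀ i, 0 ≤ x i)
    (i₀ : ι) :
    μ {ω | ∀ i, x i < r * S ω i} = μ {ω | ∑ i, x i < r * S ω i₀} := by
  have ht : 0 ≤ (∑ i, x i) / r := div_nonneg (Finset.sum_nonneg fun i _ ↦ hx i) hr.le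
  simp_rw [← div_lt_iff₀' hr]
  rw [measure_lt_apply_eq_measure_forall_single_lt hpos _ i₀]
  refine (ENNReal.toReal_eq_toReal_iff' (measure_ne_top _ _) (measure_ne_top _ _)).1 ?_
  rw [hS _ fun i ↦ div_nonneg (hx i) hr.le, hS _ fun i ↦ by by_cases hi : i = i₀ <;> simp [hi, ht],
    Finset.sum_div, Finset.sum_pi_single', if_pos (Finset.mem_univ _)]

end

theorem l1_norm_symmetric_joint_survival
    {Ω : Type*} [MeasureSpace Ω] [IsProbabilityMeasure (ℙ : Measure Ω)]
    (d : ℕ) (hd : 2 ≤ d)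
    (R : Ω → ℝ) (S : Ω → (Fin d → ℝ))
    (hRm : Measurable R) (hSm : Measurable S)
    (hR : ∀ᵐ ω ∂ℙ, 0 < R ω)
    (hInd : IndepFun R S ℙ)
    (hSsurv : ∀ x : Fin d → ℝ, (∀ i, 0 ≤ x i) →
      (ℙ {ω | ∀ i, x i < S ω i}).toReal = (max (1 - ∑ i, x i) 0) ^ (d - 1))
    (ψ : ℝ → ℝ)
    (hψ : ∀ t : ℝ, ψ t = (ℙ {ω | t < R ω * S ω ⟨0, by omega⟩}).toReal) :
    ∀ x : Fin d → ℝ, (∀ i, 0 ≤ x i) →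
      (ℙ {ω | ∀ i, x i < R ω * S ω i}).toReal = ψ (∑ i, x i) := by
  intro x hx
  have hSpos : ∀ᵐ ω ∂ℙ, ∀ i, 0 < S ω i := by
    refine (ae_iff_measure_eq (by measurability)).2 ?_
    rw [measure_univ, ← ENNReal.toReal_eq_one_iff]
    simpa using hSsurv 0 fun _ ↦ le_rfl
  rw [hψ]
  congr 1
  refine hInd.measure_preimage_eq_of_ae_sections_eq hRm hSm
    (A := {p | ∀ i, x i < p.1 * p.2 i}) (B := {p | ∑ i, x i < p.1 * p.2 ⟨0, by omega⟩})
    (by measurability) (by measurability) ?_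
  filter_upwards [(ae_map_iff hRm.aemeasurable measurableSet_Ioi).2 hR] with r hr
  exact measure_forall_lt_mul_eq_measure_sum_lt (G := fun t ↦ max (1 - t) 0 ^ (d - 1))
    hSsurv hSpos hr hx _
end

section
/- Two Archimedean generators ψ and ψ̃ generate the same Archimedean copula (in dimension d ≥ 2) if and only if there exists c > 0 such that ψ̃(cx) = ψ(x) for all x ≥ 0. -/
/-!
Write `g = ψ̃⁻¹ ∘ ψ`. On pairs `(ψ x, ψ y)` equality of the bivariate copulas reads
`ψ (x + y) = ψ̃ (g x + g y)`, so `g` solves Cauchy's equation on the region where `ψ > 0`.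
Being monotone, `g` is linear there, `g x = c x`, whence `ψ̃ (c x) = ψ x` while `ψ x > 0`;
continuity carries this to the first zero of `ψ` and beyond. Conversely, rescaling the
argument of a generator rescales its pseudo-inverse by the same factor, leaving the copula
unchanged; higher dimensions reduce to pairs by padding with ones, since `ψ⁻¹ 1 = 0`.
-/

open Filter Set

/-- An Archimedean generator: continuous on `[0,∞)`, `ψ 0 = 1`,
`ψ x → 0` as `x → ∞`, strictly decreasing where positive, with values in `[0,1]`. -/
def IsArchGenerator (ψ : ℝ → ℝ) : Prop :=
  ContinuousOn ψ (Set.Ici 0) ∧ ψ 0 = 1 ∧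
    Filter.Tendsto ψ Filter.atTop (nhds 0) ∧
    StrictAntiOn ψ {x | 0 ≤ x ∧ 0 < ψ x} ∧
    ∀ x, 0 ≤ x → ψ x ∈ Set.Icc (0:ℝ) 1

/-- Pseudo-inverse of an Archimedean generator: `ψ⁻¹ u = inf {x > 0 | ψ x = u}`. -/
noncomputable def archPseudoInv (ψ : ℝ → ℝ) (u : ℝ) : ℝ :=
  sInf {x | 0 < x ∧ ψ x = u}

theorem map_nat_mul_of_additiveOn_Icc {f : ℝ → ℝ} {r : ℝ}
    (hadd : ∀ x y, 0 ≤ x → 0 ≤ y → x + y ≤ r → f (x + y) = f x + f y)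
    (n : ℕ) {y : ℝ} (hy : 0 ≤ y) (hny : n * y ≤ r) : f (n * y) = n * f y := by
  induction n with
  | zero =>
    simpa using hadd 0 0 le_rfl le_rfl (by simpa using hny)
  | succ n ih =>
    push_cast at hny ⊢
    have hle : n * y ≤ r := by linarith
    rw [add_one_mul, hadd _ _ (by positivity) hy (by linarith), ih hle, add_one_mul]

theorem eq_div_mul_of_additiveOn_Icc_of_monotoneOn {f : ℝ → ℝ} {r : ℝ}
    (hadd : ∀ x y, 0 ≤ x → 0 ≤ y → x + y ≤ r → f (x + y) = f x + f y)
    (hmono : MonotoneOn f (Icc 0 r)) {x : ℝ} (hx : x ∈ Icc 0 r) : f x = f r / r * x := by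
  obtain ⟨hx0, hxr⟩ := hx
  have hf0 : f 0 = 0 := by
    simpa using map_nat_mul_of_additiveOn_Icc hadd 0 le_rfl (by simpa using hx0.trans hxr)
  rcases (hx0.trans hxr).eq_or_lt with rfl | hr
  · simp [le_antisymm hxr hx0, hf0]
  -- Cut `x` into `k` pieces of length `h = r / m` and a remainder `δ < h`.
  have key : ∀ m : ℕ, 0 < m → |f x * r - f r * x| ≤ f r * r / m := by
    intro m hm
    set h := r / m
    have hh : 0 < h := by positivity
    have hmh : m * h = r := mul_div_cancel₀ r (by positivity)
    have hhr : h ≤ r := div_le_self hr.le (Nat.one_le_cast.2 hm)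
    set k := ⌊x / h⌋₊
    set δ := x - k * h with hδ
    have hδ0 : 0 ≤ δ := by
      have := (le_div_iff₀ hh).1 (Nat.floor_le (div_nonneg hx0 hh.le)); linarith
    have hδh : δ < h := by
      have := (div_lt_iff₀ hh).1 (Nat.lt_floor_add_one (x / h)); linarith
    have hfr : f r = m * f h := by rw [← hmh, map_nat_mul_of_additiveOn_Icc hadd m hh.le hmh.le]
    have hfx : f x = k * f h + f δ := by
      rw [← map_nat_mul_of_additiveOn_Icc hadd k hh.le (by linarith), ← hadd _ _ (by positivity)
        hδ0 (by linarith), hδ, add_sub_cancel]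
    have hfδ0 : 0 ≤ f δ := hf0 ▸ hmono ⟨le_rfl, hr.le⟩ ⟨hδ0, by linarith⟩ hδ0
    have hfδh : f δ ≤ f h := hmono ⟨hδ0, by linarith⟩ ⟨hh.le, by linarith⟩ hδh.le
    have hdiff : f x * r - f r * x = m * (f δ * h - f h * δ) := by
      rw [hfx, hfr, ← hmh, hδ]; ring
    calc |f x * r - f r * x| = m * |f δ * h - f h * δ| := by
          rw [hdiff, abs_mul, Nat.abs_cast]
      _ ≤ m * (f h * h) := by
          gcongr
          rw [abs_le]
          constructor <;> nlinarith
      _ = f r * r / m := by rw [hfr, ← hmh]; field_simp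
  have hlim := tendsto_const_div_atTop_nhds_zero_nat (f r * r)
  have := abs_nonpos_iff.1 (ge_of_tendsto hlim ((eventually_gt_atTop 0).mono key))
  field_simp
  linarith

theorem archPseudoInv_nonneg (ψ : ℝ → ℝ) (u : ℝ) : 0 ≤ archPseudoInv ψ u :=
  Real.sInf_nonneg fun _ hx => hx.1.le

open scoped Pointwise in
theorem archPseudoInv_eq_mul_of_scaling {ψ ψt : ℝ → ℝ} {c : ℝ} (hc : 0 < c)
    (h : ∀ x ≥ (0:ℝ), ψt (c * x) = ψ x) (u : ℝ) :
    archPseudoInv ψt u = c * archPseudoInv ψ u := by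
  have hset : {x | 0 < x ∧ ψt x = u} = c • {x | 0 < x ∧ ψ x = u} := by
    ext y
    refine ⟨fun ⟨hy, hψy⟩ => ⟨c⁻¹ * y, ⟨by positivity, ?_⟩, mul_inv_cancel_left₀ hc.ne' y⟩, ?_⟩
    · rw [← h _ (by positivity), mul_inv_cancel_left₀ hc.ne', hψy]
    · rintro ⟨x, ⟨hx, rfl⟩, rfl⟩
      exact ⟨mul_pos hc hx, h x hx.le⟩
  rw [archPseudoInv, archPseudoInv, hset, Real.sInf_smul_of_nonneg hc.le, smul_eq_mul]

namespace IsArchGenerator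

variable {ψ : ℝ → ℝ}

theorem nonneg (hψ : IsArchGenerator ψ) {x : ℝ} (hx : 0 ≤ x) : 0 ≤ ψ x := (hψ.2.2.2.2 x hx).1

theorem le_one (hψ : IsArchGenerator ψ) {x : ℝ} (hx : 0 ≤ x) : ψ x ≤ 1 := (hψ.2.2.2.2 x hx).2

theorem surjOn (hψ : IsArchGenerator ψ) : SurjOn ψ (Ici 0) (Ioc 0 1) := by
  intro u ⟨hu0, hu1⟩
  obtain ⟨N, hN⟩ := (hψ.2.2.1.eventually (gt_mem_nhds hu0)).exists_forall_of_atTop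
  obtain ⟨x, hx, rfl⟩ := intermediate_value_Icc' (le_max_right N 0)
    (hψ.1.mono Icc_subset_Ici_self) ⟨(hN _ (le_max_left _ _)).le, hψ.2.1 ▸ hu1⟩
  exact ⟨x, hx.1, rfl⟩

theorem antitoneOn (hψ : IsArchGenerator ψ) : AntitoneOn ψ (Ici 0) := by
  intro a ha b hb hab
  by_cases hψb : ψ b = 0
  · exact hψb ▸ hψ.nonneg ha
  replace hψb : 0 < ψ b := (hψ.nonneg hb).lt_of_ne' hψb
  by_cases hψa : 0 < ψ a
  · exact hψ.2.2.2.1.antitoneOn ⟨ha, hψa⟩ ⟨hb, hψb⟩ hab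
  -- Otherwise `ψ a = 0`, and by the intermediate value theorem some `x ≤ a < b` has
  -- `0 < ψ x < ψ b`, contradicting strict antitonicity.
  obtain ⟨x, hx, hψx⟩ := intermediate_value_Icc' ha (hψ.1.mono Icc_subset_Ici_self)
    (show ψ b / 2 ∈ Icc (ψ a) (ψ 0) from ⟨by linarith [hψ.nonneg ha],
      by linarith [hψ.2.1, hψ.le_one hb]⟩)
  have hxb : x < b := hx.2.trans_lt (hab.lt_of_ne fun h => by simp_all)
  have := hψ.2.2.2.1 ⟨hx.1, by linarith⟩ ⟨hb, hψb⟩ hxb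
  linarith

theorem archPseudoInv_apply (hψ : IsArchGenerator ψ) {x : ℝ} (hx : 0 ≤ x) (hψx : 0 < ψ x) :
    archPseudoInv ψ (ψ x) = x := by
  have hset : {y | 0 < y ∧ ψ y = ψ x} = Ioi 0 ∩ {x} := by
    ext y
    refine and_congr_right fun hy => ⟨fun h => hψ.2.2.2.1.injOn ⟨hy.le, h ▸ hψx⟩ ⟨hx, hψx⟩ h,
      fun h => h ▸ rfl⟩
  rw [archPseudoInv, hset]
  rcases hx.eq_or_lt with rfl | hx
  · simp
  · simp [hx]

theorem apply_archPseudoInv (hψ : IsArchGenerator ψ) {u : ℝ} (hu : u ∈ Ioc 0 1) :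
    ψ (archPseudoInv ψ u) = u := by
  obtain ⟨x, hx, rfl⟩ := hψ.surjOn hu
  rw [hψ.archPseudoInv_apply hx hu.1]

theorem archPseudoInv_one (hψ : IsArchGenerator ψ) : archPseudoInv ψ 1 = 0 := by
  simpa [hψ.2.1] using hψ.archPseudoInv_apply le_rfl (by simp [hψ.2.1])

theorem exists_pos_apply_pos (hψ : IsArchGenerator ψ) : ∃ t > 0, 0 < ψ t := by
  obtain ⟨t, ht, hψt⟩ := hψ.surjOn (show (1 / 2 : ℝ) ∈ Ioc 0 1 by norm_num)
  refine ⟨t, (mem_Ici.1 ht).lt_of_ne ?_, by simp [hψt]⟩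
  rintro rfl
  norm_num [hψ.2.1] at hψt

theorem eqOn_Ici_of_eqOn_pos (hψ : IsArchGenerator ψ) {φ : ℝ → ℝ} (hφc : ContinuousOn φ (Ici 0))
    (hφa : AntitoneOn φ (Ici 0)) (hφ0 : ∀ x, 0 ≤ x → 0 ≤ φ x)
    (h : EqOn φ ψ {x | 0 ≤ x ∧ 0 < ψ x}) : EqOn φ ψ (Ici 0) := by
  intro x hx
  rcases (hψ.nonneg hx).lt_or_eq with hψx | hψx
  · exact h ⟨hx, hψx⟩
  -- `φ = ψ` on `[0, s)`, where `s` is the first zero of `ψ`, passes to `s` by continuity.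
  set Z := Ici 0 ∩ ψ ⁻¹' {0}
  have hZ : IsClosed Z := hψ.1.preimage_isClosed_of_isClosed isClosed_Ici isClosed_singleton
  have hbdd : BddBelow Z := ⟨0, fun y hy => hy.1⟩
  obtain ⟨hs0, hψs⟩ : sInf Z ∈ Z := hZ.csInf_mem ⟨x, hx, hψx.symm⟩ hbdd
  set s := sInf Z
  have hs : 0 < s := hs0.lt_of_ne fun h => by simp [← h, hψ.2.1] at hψs
  have hIco : EqOn φ ψ (Ico 0 s) := fun y hy =>
    h ⟨hy.1, (hψ.nonneg hy.1).lt_of_ne fun h0 => (csInf_le hbdd ⟨hy.1, h0.symm⟩).not_gt hy.2⟩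
  have hφs : φ s = 0 := (hIco.of_subset_closure (hφc.mono Icc_subset_Ici_self)
    (hψ.1.mono Icc_subset_Ici_self) Ico_subset_Icc_self (closure_Ico hs.ne).superset
    ⟨hs0, le_rfl⟩).trans hψs
  rw [← hψx]
  exact le_antisymm (hφs ▸ hφa hs0 hx (csInf_le hbdd ⟨hx, hψx.symm⟩)) (hφ0 x hx)

end IsArchGenerator

noncomputable def archCopula {ι : Type*} [Fintype ι] (ψ : ℝ → ℝ) (u : ι → ℝ) : ℝ :=
  ψ (∑ i, archPseudoInv ψ (u i))

theorem archCopula_fin_two (ψ : ℝ → ℝ) (a b : ℝ) :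
    archCopula ψ ![a, b] = ψ (archPseudoInv ψ a + archPseudoInv ψ b) := by
  simp [archCopula, Fin.sum_univ_two]

theorem archCopula_eq_of_scaling {ι : Type*} [Fintype ι] {ψ ψt : ℝ → ℝ} {c : ℝ} (hc : 0 < c)
    (h : ∀ x ≥ (0:ℝ), ψt (c * x) = ψ x) (u : ι → ℝ) : archCopula ψt u = archCopula ψ u := by
  simp only [archCopula, archPseudoInv_eq_mul_of_scaling hc h, ← Finset.mul_sum]
  exact h _ (Finset.sum_nonneg fun i _ => archPseudoInv_nonneg ψ (u i))

theorem IsArchGenerator.archCopula_extend_one {ι κ : Type*} [Fintype ι] [Fintype κ]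
    {ψ : ℝ → ℝ} (hψ : IsArchGenerator ψ) {e : ι → κ} (he : Function.Injective e) (u : ι → ℝ) :
    archCopula ψ (Function.extend e u 1) = archCopula ψ u := by
  refine congrArg ψ (Fintype.sum_of_injective e he _ _ (fun k hk => ?_) fun i => ?_).symm
  · rw [Function.extend_apply' _ _ _ hk, Pi.one_apply, hψ.archPseudoInv_one]
  · rw [he.extend_apply]

section Bivariate

variable {ψ ψt : ℝ → ℝ}

theorem monotoneOn_archPseudoInv_comp (hψ : IsArchGenerator ψ) (hψt : IsArchGenerator ψt) :
    MonotoneOn (fun x => archPseudoInv ψt (ψ x)) {x | 0 ≤ x ∧ 0 < ψ x} := by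
  intro x ⟨hx, hψx⟩ y ⟨hy, hψy⟩ hxy
  have hψty : ψt (archPseudoInv ψt (ψ y)) = ψ y := hψt.apply_archPseudoInv ⟨hψy, hψ.le_one hy⟩
  have hψtx : ψt (archPseudoInv ψt (ψ x)) = ψ x := hψt.apply_archPseudoInv ⟨hψx, hψ.le_one hx⟩
  refine (hψt.2.2.2.1.le_iff_ge ⟨archPseudoInv_nonneg _ _, by rwa [hψty]⟩
    ⟨archPseudoInv_nonneg _ _, by rwa [hψtx]⟩).1 ?_
  rw [hψty, hψtx]
  exact hψ.antitoneOn hx hy hxy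

theorem archPseudoInv_comp_add (hψ : IsArchGenerator ψ) (hψt : IsArchGenerator ψt)
    (H : ∀ a ∈ Ioc (0:ℝ) 1, ∀ b ∈ Ioc (0:ℝ) 1, archCopula ψ ![a, b] = archCopula ψt ![a, b])
    {x y : ℝ} (hx : 0 ≤ x) (hy : 0 ≤ y) (hxy : 0 < ψ (x + y)) :
    archPseudoInv ψt (ψ (x + y)) = archPseudoInv ψt (ψ x) + archPseudoInv ψt (ψ y) := by
  have hψx : 0 < ψ x :=
    hxy.trans_le (hψ.antitoneOn hx (add_nonneg hx hy) (le_add_of_nonneg_right hy))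
  have hψy : 0 < ψ y :=
    hxy.trans_le (hψ.antitoneOn hy (add_nonneg hx hy) (le_add_of_nonneg_left hx))
  have key := H _ ⟨hψx, hψ.le_one hx⟩ _ ⟨hψy, hψ.le_one hy⟩
  rw [archCopula_fin_two, archCopula_fin_two, hψ.archPseudoInv_apply hx hψx,
    hψ.archPseudoInv_apply hy hψy] at key
  rw [key, hψt.archPseudoInv_apply (add_nonneg (archPseudoInv_nonneg _ _)
    (archPseudoInv_nonneg _ _)) (key ▸ hxy)]

theorem exists_archPseudoInv_comp_eq_mul (hψ : IsArchGenerator ψ) (hψt : IsArchGenerator ψt)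
    (H : ∀ a ∈ Ioc (0:ℝ) 1, ∀ b ∈ Ioc (0:ℝ) 1, archCopula ψ ![a, b] = archCopula ψt ![a, b]) :
    ∃ c > (0:ℝ), ∀ x, 0 ≤ x → 0 < ψ x → archPseudoInv ψt (ψ x) = c * x := by
  set g := fun x => archPseudoInv ψt (ψ x)
  have hlin : ∀ x r, 0 ≤ x → x ≤ r → 0 < ψ r → g x = g r / r * x := by
    intro x r hx hxr hψr
    have hpos : ∀ z, 0 ≤ z → z ≤ r → 0 ≤ z ∧ 0 < ψ z := fun z hz hzr =>
      ⟨hz, hψr.trans_le (hψ.antitoneOn hz (hz.trans hzr) hzr)⟩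
    refine eq_div_mul_of_additiveOn_Icc_of_monotoneOn (fun y z hy hz hyz => ?_)
      ((monotoneOn_archPseudoInv_comp hψ hψt).mono fun z hz => hpos z hz.1 hz.2) ⟨hx, hxr⟩
    exact archPseudoInv_comp_add hψ hψt H hy hz (hpos _ (add_nonneg hy hz) hyz).2
  obtain ⟨t, ht, hψt0⟩ := hψ.exists_pos_apply_pos
  have hgt : 0 < g t := by
    refine (archPseudoInv_nonneg _ _).lt_of_ne fun h => ht.ne' ?_
    have : ψ t = ψ 0 := by
      rw [← hψt.apply_archPseudoInv ⟨hψt0, hψ.le_one ht.le⟩, ← h, hψt.2.1, hψ.2.1]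
    exact hψ.2.2.2.1.injOn ⟨ht.le, hψt0⟩ ⟨le_rfl, by simp [hψ.2.1]⟩ this
  refine ⟨g t / t, div_pos hgt ht, fun x hx hψx => ?_⟩
  rcases le_total x t with hxt | htx
  · exact hlin x t hx hxt hψt0
  · rw [hlin t x ht.le htx hψx, mul_div_cancel_right₀ _ ht.ne',
      div_mul_cancel₀ _ (ht.trans_le htx).ne']

theorem exists_scaling_of_archCopula_fin_two_eq (hψ : IsArchGenerator ψ)
    (hψt : IsArchGenerator ψt)
    (H : ∀ a ∈ Ioc (0:ℝ) 1, ∀ b ∈ Ioc (0:ℝ) 1, archCopula ψ ![a, b] = archCopula ψt ![a, b]) :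
    ∃ c > (0:ℝ), ∀ x ≥ (0:ℝ), ψt (c * x) = ψ x := by
  obtain ⟨c, hc, hg⟩ := exists_archPseudoInv_comp_eq_mul hψ hψt H
  refine ⟨c, hc, fun x hx => hψ.eqOn_Ici_of_eqOn_pos (φ := fun x => ψt (c * x)) ?_ ?_ ?_ ?_ hx⟩
  · exact hψt.1.comp (continuousOn_const.mul continuousOn_id) fun y hy => mul_nonneg hc.le hy
  · exact fun a ha b hb hab =>
      hψt.antitoneOn (mul_nonneg hc.le ha) (mul_nonneg hc.le hb) (by gcongr)
  · exact fun y hy => hψt.nonneg (mul_nonneg hc.le hy)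
  · intro y ⟨hy, hψy⟩
    show ψt (c * y) = ψ y
    rw [← hg y hy hψy, hψt.apply_archPseudoInv ⟨hψy, hψ.le_one hy⟩]

end Bivariate

theorem same_archimedean_copula_iff_scaling
    (d : ℕ) (hd : 2 ≤ d) (ψ ψt : ℝ → ℝ)
    (hψ : IsArchGenerator ψ) (hψt : IsArchGenerator ψt) :
    (∀ u : Fin d → ℝ, (∀ i, u i ∈ Set.Icc (0:ℝ) 1) →
        ψ (∑ i, archPseudoInv ψ (u i)) = ψt (∑ i, archPseudoInv ψt (u i))) ↔
      ∃ c > (0:ℝ), ∀ x ≥ (0:ℝ), ψt (c * x) = ψ x := by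
  constructor
  · intro H
    refine exists_scaling_of_archCopula_fin_two_eq hψ hψt fun a ha b hb => ?_
    have he := Fin.castLE_injective hd
    rw [← hψ.archCopula_extend_one he, ← hψt.archCopula_extend_one he]
    refine H _ fun i => ?_
    by_cases hi : ∃ j, Fin.castLE hd j = i
    · obtain ⟨j, rfl⟩ := hi
      rw [he.extend_apply]
      fin_cases j
      exacts [Ioc_subset_Icc_self ha, Ioc_subset_Icc_self hb]
    · rw [Function.extend_apply' _ _ _ hi]
      exact ⟨zero_le_one, le_rfl⟩
  · rintro ⟨c, hc, h⟩ u -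
    exact (archCopula_eq_of_scaling hc h u).symm
end

section
/- Let ψ be a d-monotone function on (0,∞) (for d ≥ 2) with ψ(0)=1 and ψ(x)→0 as x→∞, and suppose ψ is regularly varying at infinity with index −α for some α > 0. Then for each k = 0,1,...,d−1, the function x ↦ (−1)^k x^k ψ^{(k)}(x) is asymptotically equivalent to c_k ψ(x) as x→∞, where c_0 = 1 and c_k = ∏_{j=0}^{k−1}(j+α). -/
/-!
Write `f k = (-1)^k ψ^{(k)}`, with the density `g` in place of `ψ^{(d-1)}`. For `k ≤ d - 2`,
`f k` is convex on `(0, ∞)` with right derivative `-f (k+1)`, which gives the sandwich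
`(y - x) f (k+1) y ≤ f k x - f k y ≤ (y - x) f (k+1) x` for `0 < x ≤ y`. By the monotone
density theorem (compare `f k (b x)` with `f k x` for `b` close to `1`), if `f k` varies
regularly with index `-(α + k)` then `x f (k+1) x / f k x → α + k`; so
`x^(k+1) f (k+1) x / ψ x → (α + k) c_k = c_(k+1)`, and `f (k+1)` varies regularly with
index `-(α + k + 1)`. Induction on `k` concludes.
-/

open Filter Set intervalIntegral
open Topology MeasureTheory

def IsRegularlyVarying (f : ℝ → ℝ) (ρ : ℝ) : Prop :=
  ∀ c > (0:ℝ), Tendsto (fun x => f (c * x) / f x) atTop (𝓝 (c ^ ρ))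

lemma tendsto_one_sub_rpow_neg_div_sub_one (β : ℝ) :
    Tendsto (fun t : ℝ => (1 - t ^ (-β)) / (t - 1)) (𝓝[≠] 1) (𝓝 β) := by
  have hderiv : HasDerivAt (fun t : ℝ => t ^ (-β)) (-β) 1 := by
    simpa using Real.hasDerivAt_rpow_const (x := 1) (p := -β) (Or.inl one_ne_zero)
  have := (hasDerivAt_iff_tendsto_slope.1 hderiv).neg
  rw [neg_neg] at this
  refine this.congr fun t => ?_
  rw [slope_def_field, Real.one_rpow, ← neg_div, neg_sub]

namespace IsRegularlyVarying

variable {f g : ℝ → ℝ} {ρ : ℝ}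

lemma eventually_ne_zero (hf : IsRegularlyVarying f ρ) : ∀ᶠ x in atTop, f x ≠ 0 := by
  have h1 := hf 1 one_pos
  simp only [one_mul, Real.one_rpow] at h1
  filter_upwards [h1.eventually_ne one_ne_zero] with x hx h0
  simp [h0] at hx

lemma of_tendsto_div (hg : IsRegularlyVarying g ρ) {L : ℝ} (hL : L ≠ 0)
    (hfg : Tendsto (fun x => f x / g x) atTop (𝓝 L)) : IsRegularlyVarying f ρ := by
  intro c hc
  have hcx : Tendsto (c * ·) atTop atTop := tendsto_id.const_mul_atTop hc
  have hlim := ((hfg.comp hcx).mul (hg c hc)).div hfg hL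
  rw [mul_div_cancel_left₀ _ hL] at hlim
  refine hlim.congr' ?_
  filter_upwards [hfg.eventually_ne hL, hcx.eventually (hfg.eventually_ne hL)] with x hx hcx
  obtain ⟨hfx, hgx⟩ := div_ne_zero_iff.1 hx
  obtain ⟨-, hgcx⟩ := div_ne_zero_iff.1 hcx
  simp only [Function.comp_apply, Pi.div_apply]
  field_simp

lemma of_pow_mul {n : ℕ} (hf : IsRegularlyVarying (fun x => x ^ n * f x) ρ) :
    IsRegularlyVarying f (ρ - n) := by
  intro c hc
  rw [Real.rpow_sub hc, Real.rpow_natCast]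
  refine ((hf c hc).div_const (c ^ n)).congr' ?_
  filter_upwards [eventually_gt_atTop 0] with x hx
  rcases eq_or_ne (f x) 0 with hfx | hfx
  · simp [hfx]
  · field_simp
    ring

variable {u : ℝ → ℝ} {β : ℝ}

lemma eventually_lt_mul_div_of_sub_le (hf : IsRegularlyVarying f (-β))
    (hpos : ∀ᶠ x in atTop, 0 < f x)
    (hsub : ∀ᶠ x in atTop, ∀ y, x ≤ y → f x - f y ≤ (y - x) * u x) {l : ℝ} (hl : l < β) :
    ∀ᶠ x in atTop, l < x * u x / f x := by
  have hlim := (tendsto_one_sub_rpow_neg_div_sub_one β).mono_left (nhdsGT_le_nhdsNE 1)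
  obtain ⟨b, hlb, hb1 : 1 < b⟩ := ((tendsto_order.1 hlim).1 l hl |>.and self_mem_nhdsWithin).exists
  rw [lt_div_iff₀ (by linarith)] at hlb
  have hratio : ∀ᶠ x in atTop, f (b * x) / f x < 1 - l * (b - 1) :=
    (tendsto_order.1 (hf b (by linarith))).2 _ (by linarith)
  filter_upwards [hpos, hsub, hratio, eventually_gt_atTop 0] with x hfx hsubx hratiox hx
  have hdiff := hsubx (b * x) (by nlinarith)
  have hfbx : f (b * x) < (1 - l * (b - 1)) * f x := (div_lt_iff₀ hfx).1 hratiox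
  have : (b - 1) * (l * f x) < (b - 1) * (x * u x) := by linarith
  rw [lt_div_iff₀ hfx]
  exact lt_of_mul_lt_mul_left this (by linarith)

lemma eventually_mul_div_lt_of_mul_le_sub (hf : IsRegularlyVarying f (-β))
    (hpos : ∀ᶠ x in atTop, 0 < f x)
    (hsub : ∀ᶠ x in atTop, ∀ y, x ≤ y → (y - x) * u y ≤ f x - f y) {m : ℝ} (hm : β < m) :
    ∀ᶠ x in atTop, x * u x / f x < m := by
  have hlim := (tendsto_one_sub_rpow_neg_div_sub_one β).mono_left (nhdsLT_le_nhdsNE 1)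
  obtain ⟨c, ⟨hcm, hc1 : c < 1⟩, hc0 : 0 < c⟩ := ((tendsto_order.1 hlim).2 m hm
    |>.and self_mem_nhdsWithin |>.and (nhdsWithin_le_nhds (Ioi_mem_nhds one_pos))).exists
  rw [div_lt_iff_of_neg (by linarith)] at hcm
  have hratio : ∀ᶠ x in atTop, f (c * x) / f x < 1 + m * (1 - c) :=
    (tendsto_order.1 (hf c hc0)).2 _ (by linarith)
  have hcx : Tendsto (c * ·) atTop atTop := tendsto_id.const_mul_atTop hc0
  filter_upwards [hpos, hcx.eventually hsub, hratio, eventually_gt_atTop 0]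
    with x hfx hsubx hratiox hx
  have hdiff := hsubx x (by nlinarith)
  have hfcx : f (c * x) < (1 + m * (1 - c)) * f x := (div_lt_iff₀ hfx).1 hratiox
  have : (1 - c) * (x * u x) < (1 - c) * (m * f x) := by linarith
  rw [div_lt_iff₀ hfx]
  exact lt_of_mul_lt_mul_left this (by linarith)

theorem tendsto_mul_div_of_sandwich (hf : IsRegularlyVarying f (-β))
    (hpos : ∀ᶠ x in atTop, 0 < f x)
    (hsand : ∀ᶠ x in atTop, ∀ y, x ≤ y → f x - f y ∈ Icc ((y - x) * u y) ((y - x) * u x)) :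
    Tendsto (fun x => x * u x / f x) atTop (𝓝 β) :=
  tendsto_order.2
    ⟨fun _ hl => hf.eventually_lt_mul_div_of_sub_le hpos
      (hsand.mono fun _ h y hy => (h y hy).2) hl,
     fun _ hm => hf.eventually_mul_div_lt_of_mul_le_sub hpos
      (hsand.mono fun _ h y hy => (h y hy).1) hm⟩

end IsRegularlyVarying

theorem tendsto_pow_mul_div_of_sandwich (f : ℕ → ℝ → ℝ) (N : ℕ) {α : ℝ} (hα : 0 < α)
    (hf₀ : IsRegularlyVarying (f 0) (-α)) (hpos : ∀ᶠ x in atTop, 0 < f 0 x)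
    (hsand : ∀ k, k + 1 < N → ∀ᶠ x in atTop, ∀ y, x ≤ y →
      f k x - f k y ∈ Icc ((y - x) * f (k + 1) y) ((y - x) * f (k + 1) x)) :
    ∀ k < N, Tendsto (fun x => x ^ k * f k x / f 0 x) atTop
      (𝓝 (∏ j ∈ Finset.range k, ((j : ℝ) + α))) := by
  intro k
  induction k with
  | zero =>
    intro _
    refine tendsto_const_nhds.congr' ?_
    filter_upwards [hpos] with x hx
    simp [hx.ne']
  | succ n ih =>
    intro hn
    have ihn := ih (by omega)
    have hcn : 0 < ∏ j ∈ Finset.range n, ((j : ℝ) + α) := Finset.prod_pos fun j _ => by positivity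
    have hfn_pos : ∀ᶠ x in atTop, 0 < f n x := by
      filter_upwards [hpos, (tendsto_order.1 ihn).1 0 hcn, eventually_gt_atTop 0]
        with x hf₀x hq hx
      exact pos_of_mul_pos_right (div_pos_iff_of_pos_right hf₀x |>.1 hq) (pow_pos hx n).le
    have hfn : IsRegularlyVarying (f n) (-(n + α)) := by
      have := (hf₀.of_tendsto_div hcn.ne' ihn).of_pow_mul
      rwa [neg_sub_left] at this
    have hdensity := hfn.tendsto_mul_div_of_sandwich hfn_pos (hsand n hn)
    rw [Finset.prod_range_succ, mul_comm]
    refine (hdensity.mul ihn).congr' ?_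
    filter_upwards [hfn_pos] with x hx
    field_simp
    ring

lemma tendsto_ceil_mul_div_nhdsWithin_Ici (x : ℝ) :
    Tendsto (fun n : ℕ => (⌈x * (n + 1)⌉ : ℝ) / (n + 1)) atTop (𝓝[≥] x) := by
  have hlo : ∀ n : ℕ, x ≤ (⌈x * (n + 1)⌉ : ℝ) / (n + 1) := fun n => by
    rw [le_div_iff₀ (by positivity)]
    exact Int.le_ceil _
  have hhi : ∀ n : ℕ, (⌈x * (n + 1)⌉ : ℝ) / (n + 1) ≤ x + 1 / (n + 1) := fun n => by
    rw [div_le_iff₀ (by positivity), add_mul, one_div_mul_cancel (by positivity)]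
    exact (Int.ceil_lt_add_one _).le
  refine tendsto_nhdsWithin_of_tendsto_nhds_of_eventually_within _ ?_ (.of_forall hlo)
  refine tendsto_of_tendsto_of_tendsto_of_le_of_le tendsto_const_nhds ?_ hlo hhi
  simpa using tendsto_const_nhds.add (tendsto_one_div_add_atTop_nhds_zero_nat (𝕜 := ℝ))

lemma measurable_of_continuousWithinAt_Ici {β : Type*} [TopologicalSpace β]
    [TopologicalSpace.PseudoMetrizableSpace β] [MeasurableSpace β] [BorelSpace β] {g : ℝ → β}
    (hg : ∀ x, ContinuousWithinAt g (Ici x) x) : Measurable g := by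
  refine measurable_of_tendsto_metrizable
    (f := fun (n : ℕ) (x : ℝ) => g ((⌈x * (n + 1)⌉ : ℝ) / (n + 1))) (fun n => ?_)
    (tendsto_pi_nhds.2 fun x => (hg x).tendsto.comp (tendsto_ceil_mul_div_nhdsWithin_Ici x))
  exact (measurable_of_countable (fun m : ℤ => g (m / (n + 1)))).comp
    (Int.measurable_ceil.comp (measurable_id.mul_const _))

lemma hasDerivWithinAt_Ici_of_integral_eq {F g : ℝ → ℝ} {x : ℝ}
    (hg : ∀ t ≥ x, ContinuousWithinAt g (Ici t) t)
    (hF : ∀ y ≥ x, F y - F x = ∫ t in x..y, g t) :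
    HasDerivWithinAt F (g x) (Ici x) x := by
  -- frozen to the left of `x`, `g` becomes right-continuous everywhere, hence measurable
  have hmeas : Measurable fun t => g (max t x) := by
    refine measurable_of_continuousWithinAt_Ici fun t => ?_
    rcases lt_or_ge t x with htx | htx
    · refine (continuousWithinAt_const (b := g x)).congr_of_eventuallyEq ?_ (by simp [htx.le])
      filter_upwards [nhdsWithin_le_nhds (Iio_mem_nhds htx)] with s (hs : s < x)
      simp [hs.le]
    · refine (hg t htx).congr_of_mem (fun s hs => ?_) self_mem_Ici
      simp [htx.trans hs]
  have hsm : StronglyMeasurableAtFilter g (𝓝[>] x) :=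
    ⟨Ioi x, self_mem_nhdsWithin, hmeas.aestronglyMeasurable.congr <|
      (ae_restrict_mem measurableSet_Ioi).mono fun t (ht : x < t) => by simp [ht.le]⟩
  have := (integral_hasDerivWithinAt_right (IntervalIntegrable.refl (a := x)) hsm
    ((hg x le_rfl).mono Ioi_subset_Ici_self) (s := Ici x)).const_add (F x)
  refine this.congr (fun y hy => ?_) (by simp)
  rw [← hF y hy]
  ring

theorem ContDiffAt.hasDerivAt_iteratedDeriv {𝕜 F : Type*} [NontriviallyNormedField 𝕜]
    [NormedAddCommGroup F] [NormedSpace 𝕜 F] {f : 𝕜 → F} {n : WithTop ℕ∞} {m : ℕ} {x : 𝕜}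
    (hf : ContDiffAt 𝕜 n f x) (hm : (m : WithTop ℕ∞) < n) :
    HasDerivAt (iteratedDeriv m f) (iteratedDeriv (m + 1) f x) x := by
  rw [iteratedDeriv_succ, iteratedDeriv_eq_equiv_comp]
  exact ((ContinuousMultilinearMap.piFieldEquiv 𝕜 (Fin m) F).symm.differentiableAt.comp x
    (hf.differentiableAt_iteratedFDeriv hm)).hasDerivAt

theorem ConvexOn.slope_le_of_hasDerivWithinAt_Ioi {S : Set ℝ} {f : ℝ → ℝ} {x y f' : ℝ}
    (hf : ConvexOn ℝ S f) (hx : x ∈ S) (hy : y ∈ interior S) (hxy : x < y)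
    (hf' : HasDerivWithinAt f f' (Ioi y) y) : slope f x y ≤ f' :=
  calc slope f x y ≤ derivWithin f (Iio y) y := hf.slope_le_leftDeriv_of_mem_interior hx hy hxy
    _ ≤ derivWithin f (Ioi y) y := hf.leftDeriv_le_rightDeriv_of_mem_interior hy
    _ = f' := hf'.derivWithin (uniqueDiffWithinAt_Ioi y)

noncomputable def signedDeriv (d : ℕ) (ψ g : ℝ → ℝ) (k : ℕ) (x : ℝ) : ℝ :=
  (-1) ^ k * if k = d - 1 then g x else iteratedDeriv k ψ x

section signedDeriv

variable {d k : ℕ} {ψ g : ℝ → ℝ}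

lemma signedDeriv_of_add_two_le (hk : k + 2 ≤ d) :
    signedDeriv d ψ g k = fun x => (-1) ^ k * iteratedDeriv k ψ x := by
  ext x
  simp [signedDeriv, show k ≠ d - 1 by omega]

lemma hasDerivAt_signedDeriv (hsmooth : ∀ x > (0:ℝ), ContDiffAt ℝ (↑(d - 2)) ψ x)
    (hk : k + 3 ≤ d) {x : ℝ} (hx : 0 < x) :
    HasDerivAt (signedDeriv d ψ g k) (-signedDeriv d ψ g (k + 1) x) x := by
  rw [signedDeriv_of_add_two_le (by omega), signedDeriv_of_add_two_le (by omega)]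
  have hkd : (k : WithTop ℕ∞) < ↑(d - 2) := by exact_mod_cast (by omega : k < d - 2)
  refine (((hsmooth x hx).hasDerivAt_iteratedDeriv hkd).const_mul ((-1 : ℝ) ^ k)).congr_deriv ?_
  ring

lemma hasDerivWithinAt_Ici_signedDeriv (hsmooth : ∀ x > (0:ℝ), ContDiffAt ℝ (↑(d - 2)) ψ x)
    (hg_rc : ∀ x > (0:ℝ), ContinuousWithinAt g (Set.Ici x) x)
    (hg : ∀ x > (0:ℝ), ∀ y, x ≤ y →
      iteratedDeriv (d - 2) ψ y - iteratedDeriv (d - 2) ψ x = ∫ t in x..y, g t)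
    (hk : k + 2 ≤ d) {x : ℝ} (hx : 0 < x) :
    HasDerivWithinAt (signedDeriv d ψ g k) (-signedDeriv d ψ g (k + 1) x) (Ici x) x := by
  rcases (show k + 3 ≤ d ∨ k + 2 = d by omega) with hk | rfl
  · exact (hasDerivAt_signedDeriv hsmooth hk hx).hasDerivWithinAt
  rw [signedDeriv_of_add_two_le le_rfl]
  have hval : -signedDeriv (k + 2) ψ g (k + 1) x = (-1) ^ k * g x := by
    simp [signedDeriv, pow_succ]
  rw [hval]
  refine hasDerivWithinAt_Ici_of_integral_eq (fun t ht => (hg_rc t (by linarith)).const_mul _)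
    fun y hy => ?_
  rw [Nat.add_sub_cancel] at hg
  rw [← mul_sub, intervalIntegral.integral_const_mul, ← hg x hx y hy]

lemma antitoneOn_signedDeriv (hsmooth : ∀ x > (0:ℝ), ContDiffAt ℝ (↑(d - 2)) ψ x)
    (hsign : ∀ k ≤ d - 2, ∀ x > (0:ℝ), 0 ≤ (-1 : ℝ) ^ k * iteratedDeriv k ψ x)
    (hanti : AntitoneOn (fun x => (-1 : ℝ) ^ (d - 2) * iteratedDeriv (d - 2) ψ x) (Set.Ioi 0))
    (hk : k + 2 ≤ d) : AntitoneOn (signedDeriv d ψ g k) (Ioi 0) := by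
  rcases (show k + 3 ≤ d ∨ k + 2 = d by omega) with hk | rfl
  · have hderiv := fun t (ht : t ∈ Ioi (0:ℝ)) => hasDerivAt_signedDeriv (g := g) hsmooth hk ht
    refine antitoneOn_of_hasDerivWithinAt_nonpos (convex_Ioi 0)
      (fun t ht => (hderiv t ht).continuousAt.continuousWithinAt)
      (fun t ht => (hderiv t (interior_subset ht)).hasDerivWithinAt) fun t ht => ?_
    rw [interior_Ioi] at ht
    rw [neg_nonpos, signedDeriv_of_add_two_le (by omega)]
    exact hsign (k + 1) (by omega) t ht
  · rw [signedDeriv_of_add_two_le le_rfl]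
    simpa using hanti

lemma convexOn_signedDeriv (hsmooth : ∀ x > (0:ℝ), ContDiffAt ℝ (↑(d - 2)) ψ x)
    (hsign : ∀ k ≤ d - 2, ∀ x > (0:ℝ), 0 ≤ (-1 : ℝ) ^ k * iteratedDeriv k ψ x)
    (hanti : AntitoneOn (fun x => (-1 : ℝ) ^ (d - 2) * iteratedDeriv (d - 2) ψ x) (Set.Ioi 0))
    (hconv : ConvexOn ℝ (Set.Ioi 0) (fun x => (-1 : ℝ) ^ (d - 2) * iteratedDeriv (d - 2) ψ x))
    (hk : k + 2 ≤ d) : ConvexOn ℝ (Ioi 0) (signedDeriv d ψ g k) := by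
  rcases (show k + 3 ≤ d ∨ k + 2 = d by omega) with hk | rfl
  · have hderiv := fun t (ht : t ∈ Ioi (0:ℝ)) => hasDerivAt_signedDeriv (g := g) hsmooth hk ht
    refine MonotoneOn.convexOn_of_deriv (convex_Ioi 0)
      (fun t ht => (hderiv t ht).continuousAt.continuousWithinAt)
      (fun t ht => (hderiv t (interior_subset ht)).differentiableAt.differentiableWithinAt) ?_
    rw [interior_Ioi]
    exact (antitoneOn_signedDeriv hsmooth hsign hanti (by omega)).neg.congr
      fun t ht => (hderiv t ht).deriv.symm
  · rw [signedDeriv_of_add_two_le le_rfl]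
    simpa using hconv

lemma signedDeriv_sub_mem_Icc (hsmooth : ∀ x > (0:ℝ), ContDiffAt ℝ (↑(d - 2)) ψ x)
    (hsign : ∀ k ≤ d - 2, ∀ x > (0:ℝ), 0 ≤ (-1 : ℝ) ^ k * iteratedDeriv k ψ x)
    (hanti : AntitoneOn (fun x => (-1 : ℝ) ^ (d - 2) * iteratedDeriv (d - 2) ψ x) (Set.Ioi 0))
    (hconv : ConvexOn ℝ (Set.Ioi 0) (fun x => (-1 : ℝ) ^ (d - 2) * iteratedDeriv (d - 2) ψ x))
    (hg_rc : ∀ x > (0:ℝ), ContinuousWithinAt g (Set.Ici x) x)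
    (hg : ∀ x > (0:ℝ), ∀ y, x ≤ y →
      iteratedDeriv (d - 2) ψ y - iteratedDeriv (d - 2) ψ x = ∫ t in x..y, g t)
    (hk : k + 2 ≤ d) {x y : ℝ} (hx : 0 < x) (hxy : x ≤ y) :
    signedDeriv d ψ g k x - signedDeriv d ψ g k y ∈
      Icc ((y - x) * signedDeriv d ψ g (k + 1) y) ((y - x) * signedDeriv d ψ g (k + 1) x) := by
  rcases hxy.eq_or_lt with rfl | hxy
  · simp
  have hy : 0 < y := hx.trans hxy
  have hconvk := convexOn_signedDeriv (g := g) hsmooth hsign hanti hconv hk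
  have hderiv := fun t (ht : 0 < t) =>
    (hasDerivWithinAt_Ici_signedDeriv hsmooth hg_rc hg hk ht).mono Ioi_subset_Ici_self
  have hleft := hconvk.le_slope_of_hasDerivWithinAt_Ioi hx hy hxy (hderiv x hx)
  have hright := hconvk.slope_le_of_hasDerivWithinAt_Ioi hx (by rwa [interior_Ioi]) hxy
    (hderiv y hy)
  rw [slope_def_field] at hleft hright
  rw [le_div_iff₀ (by linarith)] at hleft
  rw [div_le_iff₀ (by linarith)] at hright
  constructor <;> linarith

end signedDeriv

theorem dmonotone_regvar_derivative_asymptotics_general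
    (d : ℕ) (hd : 2 ≤ d) (ψ g : ℝ → ℝ) (α : ℝ) (hα : 0 < α)
    (hsmooth : ∀ x > (0:ℝ), ContDiffAt ℝ (↑(d - 2)) ψ x)
    (hsign : ∀ k ≤ d - 2, ∀ x > (0:ℝ), 0 ≤ (-1 : ℝ) ^ k * iteratedDeriv k ψ x)
    (hanti : AntitoneOn (fun x => (-1 : ℝ) ^ (d - 2) * iteratedDeriv (d - 2) ψ x)
      (Set.Ioi 0))
    (hconv : ConvexOn ℝ (Set.Ioi 0)
      (fun x => (-1 : ℝ) ^ (d - 2) * iteratedDeriv (d - 2) ψ x))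
    -- `g` is the right-continuous density of `ψ^{(d-2)}`
    (hg_rc : ∀ x > (0:ℝ), ContinuousWithinAt g (Set.Ici x) x)
    (hg : ∀ x > (0:ℝ), ∀ y, x ≤ y →
      iteratedDeriv (d - 2) ψ y - iteratedDeriv (d - 2) ψ x = ∫ t in x..y, g t)
    -- ψ is regularly varying at infinity with index -α
    (hRV : ∀ c > (0:ℝ), Tendsto (fun x => ψ (c * x) / ψ x) atTop (nhds (c ^ (-α)))) :
    ∀ k < d, Tendsto
      (fun x => ((-1 : ℝ) ^ k * x ^ k *
          (if k = d - 1 then g x else iteratedDeriv k ψ x)) / ψ x)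
      atTop (nhds (∏ j ∈ Finset.range k, ((j : ℝ) + α))) := by
  have hψ : signedDeriv d ψ g 0 = ψ := by
    ext x
    simp [signedDeriv, show 0 ≠ d - 1 by omega]
  have hψ_pos : ∀ᶠ x in atTop, 0 < ψ x := by
    filter_upwards [IsRegularlyVarying.eventually_ne_zero hRV, eventually_gt_atTop 0] with x hne hx
    exact (by simpa using hsign 0 (Nat.zero_le _) x hx : 0 ≤ ψ x).lt_of_ne' hne
  intro k hk
  have hlim := tendsto_pow_mul_div_of_sandwich (signedDeriv d ψ g) d hα
    (by rw [hψ]; exact hRV) (by rwa [hψ])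
    (fun j hj => (eventually_gt_atTop 0).mono fun x hx y hxy =>
      signedDeriv_sub_mem_Icc hsmooth hsign hanti hconv hg_rc hg (by omega) hx hxy) k hk
  rw [hψ] at hlim
  refine hlim.congr fun x => ?_
  simp only [signedDeriv]
  ring

theorem dmonotone_regvar_derivative_asymptotics
    (d : ℕ) (hd : 2 ≤ d) (ψ g : ℝ → ℝ) (α : ℝ) (hα : 0 < α)
    (hψ0 : ψ 0 = 1) (hψ_lim : Tendsto ψ atTop (nhds 0))
    (hsmooth : ∀ x > (0:ℝ), ContDiffAt ℝ (↑(d - 2)) ψ x)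
    (hsign : ∀ k ≤ d - 2, ∀ x > (0:ℝ), 0 ≤ (-1 : ℝ) ^ k * iteratedDeriv k ψ x)
    (hanti : AntitoneOn (fun x => (-1 : ℝ) ^ (d - 2) * iteratedDeriv (d - 2) ψ x)
      (Set.Ioi 0))
    (hconv : ConvexOn ℝ (Set.Ioi 0)
      (fun x => (-1 : ℝ) ^ (d - 2) * iteratedDeriv (d - 2) ψ x))
    -- `g` is the right-continuous density of `ψ^{(d-2)}`
    (hg_rc : ∀ x > (0:ℝ), ContinuousWithinAt g (Set.Ici x) x)
    (hg : ∀ x > (0:ℝ), ∀ y, x ≤ y →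
      iteratedDeriv (d - 2) ψ y - iteratedDeriv (d - 2) ψ x = ∫ t in x..y, g t)
    -- ψ is regularly varying at infinity with index -α
    (hRV : ∀ c > (0:ℝ), Tendsto (fun x => ψ (c * x) / ψ x) atTop (nhds (c ^ (-α)))) :
    ∀ k < d, Tendsto
      (fun x => ((-1 : ℝ) ^ k * x ^ k *
          (if k = d - 1 then g x else iteratedDeriv k ψ x)) / ψ x)
      atTop (nhds (∏ j ∈ Finset.range k, ((j : ℝ) + α))) :=
  dmonotone_regvar_derivative_asymptotics_general d hd ψ g α hα hsmooth hsign hanti hconv hg_rc hg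
    hRV
end

section
/- Let f be a non-negative, non-increasing function satisfying lim_{x→x*} f(x + a(x)t)/f(x) = e^{−t} for all t∈ℝ, where a(x)>0 and a(x)/x→0 as x→x*. If f has a density f' that is monotone in a neighborhood of x*, then lim_{x→x*} f'(x + a(x)t)/f'(x) = e^{−t} for all t∈ℝ, and moreover −f(x)/a(x) ~ f'(x) as x→x*. -/
/-!
Near the endpoint, the mean value theorem and the monotonicity of `f'` place
`a(x) f'(x + a(x) t) / f(x)` between the two difference quotients
`(f(x + a(x)(t ± h)) - f(x + a(x) t)) / (± h f(x))`. By the Gumbel condition these tend to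
`(e^{-(t ± h)} - e^{-t}) / (± h)`, so letting `h → 0` gives
`a(x) f'(x + a(x) t) / f(x) → -e^{-t}`; both claims are quotients of such limits.

This needs `x + a(x) t` to lie in the domain. At `x* = ∞` that is `a(x)/x → 0`. At a finite
`x*` it is automatic for `t ≤ 0`, which already rules out an antitone `f'`: it would give
`-e² ≥ -e` in the limit. For a monotone `f'` (convex `f`) with `f(x*-) = 0`, the tangent line
gives `f(w) ≤ (x* - w)(-f'(w))`, while `a(x) f'(w) / f(w) → -1` for `w = x + a(x) t`. Hence
`x* - w ≳ a(x)`, and `t` can be increased in steps of `1/2`.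
-/

open Filter Set Real Topology

theorem tendsto_of_eventually_mem_uIcc {α ι β : Type*} [LinearOrder β] [TopologicalSpace β]
    [OrderTopology β] {F : Filter α} {l : Filter ι} [l.NeBot] {u : α → β}
    {lo hi : ι → α → β} {ℓ μ : ι → β} {L : β}
    (hlo : ∀ i, Tendsto (lo i) F (𝓝 (ℓ i))) (hhi : ∀ i, Tendsto (hi i) F (𝓝 (μ i)))
    (hℓ : Tendsto ℓ l (𝓝 L)) (hμ : Tendsto μ l (𝓝 L))
    (hu : ∀ᶠ i in l, ∀ᶠ x in F, u x ∈ uIcc (lo i x) (hi i x)) : Tendsto u F (𝓝 L) := by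
  refine tendsto_order.2 ⟨fun b hb => ?_, fun b hb => ?_⟩
  · obtain ⟨i, hℓi, hμi, hui⟩ :=
      ((hℓ.eventually_const_lt hb).and ((hμ.eventually_const_lt hb).and hu)).exists
    filter_upwards [(hlo i).eventually_const_lt hℓi, (hhi i).eventually_const_lt hμi, hui]
      with x hlox hhix hux
    exact (lt_inf_iff.2 ⟨hlox, hhix⟩).trans_le hux.1
  · obtain ⟨i, hℓi, hμi, hui⟩ :=
      ((hℓ.eventually_lt_const hb).and ((hμ.eventually_lt_const hb).and hu)).exists
    filter_upwards [(hlo i).eventually_lt_const hℓi, (hhi i).eventually_lt_const hμi, hui]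
      with x hlox hhix hux
    exact hux.2.trans_lt (sup_lt_iff.2 ⟨hlox, hhix⟩)

section MeanValue

variable {f f' : ℝ → ℝ} {I : Set ℝ}

theorem exists_mem_Ioo_deriv_eq_slope (hI : I.OrdConnected)
    (hf : ∀ x ∈ I, HasDerivAt f (f' x) x) {p q : ℝ} (hp : p ∈ I) (hq : q ∈ I) (hpq : p < q) :
    ∃ ξ ∈ Ioo p q, f' ξ = slope f p q := by
  have hsub : Icc p q ⊆ I := hI.out hp hq
  rw [slope_def_field]
  exact exists_hasDerivAt_eq_slope f f' hpq
    (fun x hx => (hf x (hsub hx)).continuousAt.continuousWithinAt)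
    fun x hx => hf x (hsub (Ioo_subset_Icc_self hx))

theorem deriv_le_slope_of_monotoneOn (hI : I.OrdConnected)
    (hf : ∀ x ∈ I, HasDerivAt f (f' x) x) (hmono : MonotoneOn f' I) {p q : ℝ} (hp : p ∈ I)
    (hq : q ∈ I) (hpq : p < q) : f' p ≤ slope f p q := by
  obtain ⟨ξ, hξ, hξ_eq⟩ := exists_mem_Ioo_deriv_eq_slope hI hf hp hq hpq
  exact hξ_eq ▸ hmono hp (hI.out hp hq (Ioo_subset_Icc_self hξ)) hξ.1.le

theorem deriv_mem_uIcc_slope (hI : I.OrdConnected) (hf : ∀ x ∈ I, HasDerivAt f (f' x) x)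
    (hmono : MonotoneOn f' I ∨ AntitoneOn f' I) {q k : ℝ} (hk : 0 < k) (hq : q ∈ I)
    (hl : q - k ∈ I) (hr : q + k ∈ I) :
    f' q ∈ uIcc (slope f q (q - k)) (slope f q (q + k)) := by
  obtain ⟨ξ₁, hξ₁, hξ₁_eq⟩ := exists_mem_Ioo_deriv_eq_slope hI hf hl hq (by linarith)
  obtain ⟨ξ₂, hξ₂, hξ₂_eq⟩ := exists_mem_Ioo_deriv_eq_slope hI hf hq hr (by linarith)
  have hξ₁I : ξ₁ ∈ I := hI.out hl hq (Ioo_subset_Icc_self hξ₁)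
  have hξ₂I : ξ₂ ∈ I := hI.out hq hr (Ioo_subset_Icc_self hξ₂)
  rw [slope_comm, ← hξ₁_eq, ← hξ₂_eq, mem_uIcc]
  rcases hmono with hmono | hanti
  · exact Or.inl ⟨hmono hξ₁I hq hξ₁.2.le, hmono hq hξ₂I hξ₂.1.le⟩
  · exact Or.inr ⟨hanti hq hξ₂I hξ₂.1.le, hanti hξ₁I hq hξ₁.2.le⟩

end MeanValue

theorem mul_mem_uIcc_mul {y b c : ℝ} (k : ℝ) (h : y ∈ uIcc b c) : k * y ∈ uIcc (k * b) (k * c) :=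
  image_const_mul_uIcc k b c ▸ mem_image_of_mem _ h

theorem tendsto_exp_neg_slope (t : ℝ) :
    Tendsto (fun s => s⁻¹ * (exp (-(t + s)) - exp (-t))) (𝓝[≠] 0) (𝓝 (-exp (-t))) := by
  simpa using hasDerivAt_iff_tendsto_slope_zero.1 (hasDerivAt_neg t).exp

section Gumbel

variable {F : Filter ℝ} {f f' a : ℝ → ℝ} {I : Set ℝ}

theorem tendsto_mul_deriv_div_of_gumbel (hI : I.OrdConnected)
    (hf : ∀ x ∈ I, HasDerivAt f (f' x) x) (hmono : MonotoneOn f' I ∨ AntitoneOn f' I)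
    (hfpos : ∀ᶠ x in F, 0 < f x) (hapos : ∀ᶠ x in F, 0 < a x)
    (hgum : ∀ t, Tendsto (fun x => f (x + a x * t) / f x) F (𝓝 (exp (-t))))
    {t δ : ℝ} (hδ : 0 < δ) (hmem : ∀ᶠ x in F, x + a x * (t - δ) ∈ I ∧ x + a x * (t + δ) ∈ I) :
    Tendsto (fun x => a x * f' (x + a x * t) / f x) F (𝓝 (-exp (-t))) := by
  set D : ℝ → ℝ → ℝ := fun s x =>
    s⁻¹ * (f (x + a x * (t + s)) / f x - f (x + a x * t) / f x) with hD
  have hD_tendsto : ∀ s, Tendsto (D s) F (𝓝 (s⁻¹ * (exp (-(t + s)) - exp (-t)))) := fun s =>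
    ((hgum (t + s)).sub (hgum t)).const_mul s⁻¹
  have hD_slope : ∀ s ≠ 0, ∀ x, a x ≠ 0 → f x ≠ 0 →
      D s x = a x / f x * slope f (x + a x * t) (x + a x * t + a x * s) := by
    intro s hs x hax hfx
    simp only [hD, slope_def_field, mul_add, ← add_assoc]
    field_simp
    ring
  have hlim := tendsto_exp_neg_slope t
  refine tendsto_of_eventually_mem_uIcc (l := 𝓝[>] 0) (fun s => hD_tendsto (-s)) hD_tendsto
    (hlim.comp ?_) (hlim.mono_left (nhdsGT_le_nhdsNE 0)) ?_
  · simpa using (tendsto_neg_nhdsGT_neg (a := (0:ℝ))).mono_right (nhdsLT_le_nhdsNE 0)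
  · filter_upwards [Ioc_mem_nhdsGT hδ] with s ⟨hs0, hsδ⟩
    filter_upwards [hfpos, hapos, hmem] with x hfx hax ⟨hlo, hhi⟩
    have hk : 0 < a x * s := mul_pos hax hs0
    have hIcc : Icc (x + a x * (t - δ)) (x + a x * (t + δ)) ⊆ I := hI.out hlo hhi
    have hmid : ∀ v, t - δ ≤ v → v ≤ t + δ → x + a x * v ∈ I := fun v h₁ h₂ =>
      hIcc ⟨by nlinarith, by nlinarith⟩
    have hbr := mul_mem_uIcc_mul (a x / f x) (deriv_mem_uIcc_slope hI hf hmono hk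
      (hmid t (by linarith) (by linarith))
      (by convert hmid (t - s) (by linarith) (by linarith) using 1; ring)
      (by convert hmid (t + s) (by linarith) (by linarith) using 1; ring))
    rwa [hD_slope s hs0.ne' x hax.ne' hfx.ne',
      hD_slope (-s) (neg_ne_zero.2 hs0.ne') x hax.ne' hfx.ne', mul_neg, ← sub_eq_add_neg,
      mul_div_right_comm]

theorem gumbel_deriv_of_tendsto_mul_deriv_div (hfpos : ∀ᶠ x in F, 0 < f x)
    (hapos : ∀ᶠ x in F, 0 < a x)
    (hL : ∀ t, Tendsto (fun x => a x * f' (x + a x * t) / f x) F (𝓝 (-exp (-t)))) :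
    (∀ t, Tendsto (fun x => f' (x + a x * t) / f' x) F (𝓝 (exp (-t)))) ∧
      Tendsto (fun x => (-(f x) / a x) / f' x) F (𝓝 1) := by
  have h0 : Tendsto (fun x => a x * f' x / f x) F (𝓝 (-1)) := by simpa using hL 0
  refine ⟨fun t => ?_, ?_⟩
  · have h := (hL t).div h0 (by norm_num)
    rw [neg_div_neg_eq, div_one] at h
    refine h.congr' ?_
    filter_upwards [hfpos, hapos] with x hfx hax
    rw [Pi.div_apply, div_div_div_cancel_right₀ hfx.ne', mul_div_mul_left _ _ hax.ne']
  · have h := (h0.inv₀ (by norm_num)).neg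
    rw [inv_neg, inv_one, neg_neg] at h
    refine h.congr fun x => ?_
    rw [inv_div, div_div, neg_div]

theorem eventually_pos_of_gumbel (hnn : ∀ᶠ x in F, 0 ≤ f x)
    (hgum : ∀ t, Tendsto (fun x => f (x + a x * t) / f x) F (𝓝 (exp (-t)))) :
    ∀ᶠ x in F, 0 < f x := by
  have h : Tendsto (fun x => f x / f x) F (𝓝 1) := by simpa using hgum 0
  filter_upwards [h.eventually_ne one_ne_zero, hnn] with x hx hnnx
  exact hnnx.lt_of_ne fun h0 => hx (by simp [← h0])

theorem not_antitoneOn_deriv_of_gumbel [F.NeBot] (hI : I.OrdConnected)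
    (hf : ∀ x ∈ I, HasDerivAt f (f' x) x) (hfpos : ∀ᶠ x in F, 0 < f x)
    (hapos : ∀ᶠ x in F, 0 < a x)
    (hgum : ∀ t, Tendsto (fun x => f (x + a x * t) / f x) F (𝓝 (exp (-t))))
    (hmem : ∀ u ≤ 0, ∀ᶠ x in F, x + a x * u ∈ I) : ¬AntitoneOn f' I := by
  intro hanti
  have hL : ∀ t ≤ -1, Tendsto (fun x => a x * f' (x + a x * t) / f x) F (𝓝 (-exp (-t))) :=
    fun t ht => tendsto_mul_deriv_div_of_gumbel hI hf (Or.inr hanti) hfpos hapos hgum one_pos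
      ((hmem _ (by linarith)).and (hmem _ (by linarith)))
  have hle : ∀ᶠ x in F, a x * f' (x + a x * (-1)) / f x ≤ a x * f' (x + a x * (-2)) / f x := by
    filter_upwards [hfpos, hapos, hmem (-1) (by norm_num), hmem (-2) (by norm_num)]
      with x hfx hax h1 h2
    have : f' (x + a x * (-1)) ≤ f' (x + a x * (-2)) := hanti h2 h1 (by nlinarith)
    gcongr
  have := le_of_tendsto_of_tendsto (hL (-1) le_rfl) (hL (-2) (by norm_num)) hle
  simp only [neg_neg, neg_le_neg_iff, exp_le_exp] at this
  norm_num at this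

end Gumbel

theorem tendsto_add_mul_atTop {a : ℝ → ℝ} (ha : Tendsto (fun x => a x / x) atTop (𝓝 0)) (u : ℝ) :
    Tendsto (fun x => x + a x * u) atTop atTop := by
  have h : Tendsto (fun x => 1 + a x / x * u) atTop (𝓝 1) := by
    simpa using (ha.mul_const u).const_add 1
  refine (tendsto_id.atTop_mul_pos one_pos h).congr' ?_
  filter_upwards [eventually_gt_atTop 0] with x hx
  simp only [id]
  field_simp

theorem gumbel_deriv_atTop {f f' a : ℝ → ℝ} {s : Set ℝ} (hs : s ∈ atTop)
    (hmono : MonotoneOn f' s ∨ AntitoneOn f' s) (hnn : ∀ x, 0 < x → 0 ≤ f x)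
    (hf : ∀ x, 0 < x → HasDerivAt f (f' x) x) (hapos : ∀ᶠ x in atTop, 0 < a x)
    (ha : Tendsto (fun x => a x / x) atTop (𝓝 0))
    (hgum : ∀ t, Tendsto (fun x => f (x + a x * t) / f x) atTop (𝓝 (exp (-t)))) :
    (∀ t, Tendsto (fun x => f' (x + a x * t) / f' x) atTop (𝓝 (exp (-t)))) ∧
      Tendsto (fun x => (-(f x) / a x) / f' x) atTop (𝓝 1) := by
  obtain ⟨N, hN⟩ := mem_atTop_sets.1 hs
  have hIs : Ici (max N 1) ⊆ s := fun x hx => hN x (le_of_max_le_left hx)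
  have hIpos : ∀ x ∈ Ici (max N 1), 0 < x := fun x hx =>
    zero_lt_one.trans_le (le_of_max_le_right hx)
  have hmem : ∀ u, ∀ᶠ x in atTop, x + a x * u ∈ Ici (max N 1) := fun u =>
    (tendsto_add_mul_atTop ha u).eventually_ge_atTop _
  have hfpos := eventually_pos_of_gumbel ((eventually_gt_atTop 0).mono hnn) hgum
  exact gumbel_deriv_of_tendsto_mul_deriv_div hfpos hapos fun t =>
    tendsto_mul_deriv_div_of_gumbel ordConnected_Ici (fun x hx => hf x (hIpos x hx))
      (hmono.imp (·.mono hIs) (·.mono hIs)) hfpos hapos hgum one_pos ((hmem _).and (hmem _))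

section LeftEndpoint

variable {r c : ℝ} {f f' a : ℝ → ℝ}

theorem tendsto_nhdsLT_of_div_tendsto_zero (hr : 0 < r)
    (ha : Tendsto (fun x => a x / x) (𝓝[<] r) (𝓝 0)) : Tendsto a (𝓝[<] r) (𝓝 0) := by
  have hx : Tendsto (fun x : ℝ => x) (𝓝[<] r) (𝓝 r) := tendsto_nhdsWithin_of_tendsto_nhds tendsto_id
  refine (by simpa using ha.mul hx : Tendsto (fun x => a x / x * x) (𝓝[<] r) (𝓝 0)).congr' ?_
  filter_upwards [Ioo_mem_nhdsLT hr] with x hx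
  field_simp [hx.1.ne']

theorem tendsto_add_mul_nhdsLT (ha0 : Tendsto a (𝓝[<] r) (𝓝 0)) (u : ℝ) :
    Tendsto (fun x => x + a x * u) (𝓝[<] r) (𝓝 r) := by
  simpa using (tendsto_nhdsWithin_of_tendsto_nhds tendsto_id).add (ha0.mul_const u)

theorem eventually_add_mul_mem_Ioo (hc : c < r) (ha0 : Tendsto a (𝓝[<] r) (𝓝 0))
    (hapos : ∀ᶠ x in 𝓝[<] r, 0 < a x) {u v : ℝ} (huv : u ≤ v)
    (hv : ∀ᶠ x in 𝓝[<] r, x + a x * v < r) : ∀ᶠ x in 𝓝[<] r, x + a x * u ∈ Ioo c r := by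
  filter_upwards [(tendsto_add_mul_nhdsLT ha0 u).eventually_const_lt hc, hapos, hv]
    with x hcx hax hvx
  exact ⟨hcx, by nlinarith⟩

theorem tendsto_nhdsLT_zero_of_gumbel (hc : c < r) (hanti : AntitoneOn f (Ioo c r))
    (hnn : ∀ x ∈ Ioo c r, 0 ≤ f x) (ha0 : Tendsto a (𝓝[<] r) (𝓝 0))
    (hapos : ∀ᶠ x in 𝓝[<] r, 0 < a x)
    (hgum : Tendsto (fun x => f (x + a x * (-1)) / f x) (𝓝[<] r) (𝓝 (exp 1))) :
    Tendsto f (𝓝[<] r) (𝓝 0) := by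
  have hm := hanti.tendsto_nhdsWithin_Ioo_left (nonempty_Ioo.2 hc)
    ⟨0, forall_mem_image.2 hnn⟩
  set m := sInf (f '' Ioo c r)
  suffices hm0 : m = 0 from hm0 ▸ hm
  by_contra hm0
  have hshift : Tendsto (fun x => x + a x * (-1)) (𝓝[<] r) (𝓝[<] r) := by
    refine tendsto_nhdsWithin_iff.2 ⟨tendsto_add_mul_nhdsLT ha0 (-1), ?_⟩
    filter_upwards [hapos, self_mem_nhdsWithin] with x hax hx
    exact (show x + a x * (-1) < x by linarith).trans hx
  have h1 : Tendsto (fun x => f (x + a x * (-1)) / f x) (𝓝[<] r) (𝓝 1) := by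
    have h := (hm.comp hshift).div hm hm0
    rwa [div_self hm0] at h
  exact one_ne_zero ((exp_eq_one_iff 1).1 (tendsto_nhds_unique h1 hgum).symm)

theorem add_deriv_mul_sub_nonpos (hf : ∀ x ∈ Ioo c r, HasDerivAt f (f' x) x)
    (hmono : MonotoneOn f' (Ioo c r)) (hf0 : Tendsto f (𝓝[<] r) (𝓝 0)) {w : ℝ}
    (hw : w ∈ Ioo c r) : f w + f' w * (r - w) ≤ 0 := by
  refine le_of_tendsto_of_tendsto (tendsto_nhdsWithin_of_tendsto_nhds
    (by fun_prop : Continuous fun z => f w + f' w * (z - w)).continuousAt) hf0 ?_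
  filter_upwards [Ioo_mem_nhdsLT hw.2] with z hz
  have h := deriv_le_slope_of_monotoneOn ordConnected_Ioo hf hmono hw ⟨hw.1.trans hz.1, hz.2⟩ hz.1
  rw [slope_def_field, le_div_iff₀ (sub_pos.2 hz.1)] at h
  linarith

theorem eventually_add_mul_add_half_lt (hc : c < r) (hf : ∀ x ∈ Ioo c r, HasDerivAt f (f' x) x)
    (hmono : MonotoneOn f' (Ioo c r)) (hf0 : Tendsto f (𝓝[<] r) (𝓝 0))
    (hfpos : ∀ᶠ x in 𝓝[<] r, 0 < f x) (ha0 : Tendsto a (𝓝[<] r) (𝓝 0))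
    (hapos : ∀ᶠ x in 𝓝[<] r, 0 < a x)
    (hgum : ∀ t, Tendsto (fun x => f (x + a x * t) / f x) (𝓝[<] r) (𝓝 (exp (-t))))
    {v : ℝ} (hv : ∀ᶠ x in 𝓝[<] r, x + a x * v < r) :
    ∀ᶠ x in 𝓝[<] r, x + a x * (v + 1 / 2) < r := by
  have hmem := fun u (hu : u ≤ v) => eventually_add_mul_mem_Ioo hc ha0 hapos hu hv
  have hL := tendsto_mul_deriv_div_of_gumbel ordConnected_Ioo hf (Or.inl hmono) hfpos hapos
    hgum (t := v - 1 / 4) (δ := 1 / 4) (by norm_num)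
    ((hmem _ (by linarith)).and (hmem _ (by linarith)))
  have hE := exp_pos (-(v - 1 / 4))
  filter_upwards [(hL.const_mul (-3 / 4)).eventually_lt (hgum (v - 1 / 4)) (by linarith),
    hL.eventually_lt_const (neg_lt_zero.2 hE), hfpos, hapos, hmem (v - 1 / 4) (by linarith)]
    with x h34 hneg hfx hax hw
  set w := x + a x * (v - 1 / 4)
  have hf'w : f' w < 0 := by
    rw [div_lt_iff₀ hfx, zero_mul] at hneg
    nlinarith
  rw [mul_div_assoc', div_lt_div_iff_of_pos_right hfx] at h34
  have htangent := add_deriv_mul_sub_nonpos hf hmono hf0 hw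
  have h : -f' w * (3 / 4 * a x) < -f' w * (r - w) := by linarith
  have := lt_of_mul_lt_mul_left h (neg_nonneg.2 hf'w.le)
  simp only [w] at this
  linarith

theorem forall_eventually_add_mul_mem_Ioo (hc : c < r)
    (hf : ∀ x ∈ Ioo c r, HasDerivAt f (f' x) x) (hmono : MonotoneOn f' (Ioo c r))
    (hf0 : Tendsto f (𝓝[<] r) (𝓝 0)) (hfpos : ∀ᶠ x in 𝓝[<] r, 0 < f x)
    (ha0 : Tendsto a (𝓝[<] r) (𝓝 0)) (hapos : ∀ᶠ x in 𝓝[<] r, 0 < a x)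
    (hgum : ∀ t, Tendsto (fun x => f (x + a x * t) / f x) (𝓝[<] r) (𝓝 (exp (-t)))) (u : ℝ) :
    ∀ᶠ x in 𝓝[<] r, x + a x * u ∈ Ioo c r := by
  have hhalf : ∀ n : ℕ, ∀ᶠ x in 𝓝[<] r, x + a x * (n / 2) < r := by
    intro n
    induction n with
    | zero =>
      simp only [Nat.cast_zero, zero_div, mul_zero, add_zero]
      exact eventually_mem_nhdsWithin
    | succ n ih =>
      convert eventually_add_mul_add_half_lt hc hf hmono hf0 hfpos ha0 hapos hgum ih using 5
      push_cast
      ring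
  obtain ⟨n, hn⟩ := exists_nat_ge (2 * u)
  exact eventually_add_mul_mem_Ioo hc ha0 hapos (by linarith) (hhalf n)

end LeftEndpoint

theorem gumbel_deriv_nhdsLT {r : ℝ} {f f' a : ℝ → ℝ} {s : Set ℝ} (hr : 0 < r)
    (hs : s ∈ 𝓝[<] r) (hmono : MonotoneOn f' s ∨ AntitoneOn f' s)
    (hnn : ∀ x ∈ Ioo 0 r, 0 ≤ f x) (hf_anti : AntitoneOn f (Ioo 0 r))
    (hf : ∀ x ∈ Ioo 0 r, HasDerivAt f (f' x) x) (hapos : ∀ᶠ x in 𝓝[<] r, 0 < a x)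
    (ha : Tendsto (fun x => a x / x) (𝓝[<] r) (𝓝 0))
    (hgum : ∀ t, Tendsto (fun x => f (x + a x * t) / f x) (𝓝[<] r) (𝓝 (exp (-t)))) :
    (∀ t, Tendsto (fun x => f' (x + a x * t) / f' x) (𝓝[<] r) (𝓝 (exp (-t)))) ∧
      Tendsto (fun x => (-(f x) / a x) / f' x) (𝓝[<] r) (𝓝 1) := by
  obtain ⟨l, hl, hls⟩ := mem_nhdsLT_iff_exists_Ioo_subset.1 hs
  have hc : max l 0 < r := max_lt hl hr
  have hI0 : Ioo (max l 0) r ⊆ Ioo 0 r := Ioo_subset_Ioo_left (le_max_right l 0)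
  have hIs : Ioo (max l 0) r ⊆ s := (Ioo_subset_Ioo_left (le_max_left l 0)).trans hls
  have hfI : ∀ x ∈ Ioo (max l 0) r, HasDerivAt f (f' x) x := fun x hx => hf x (hI0 hx)
  have ha0 := tendsto_nhdsLT_of_div_tendsto_zero hr ha
  have hfpos := eventually_pos_of_gumbel
    (eventually_of_mem (Ioo_mem_nhdsLT hc) fun x hx => hnn x (hI0 hx)) hgum
  have hf0 := tendsto_nhdsLT_zero_of_gumbel hc (hf_anti.mono hI0) (fun x hx => hnn x (hI0 hx))
    ha0 hapos (by simpa using hgum (-1))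
  rcases hmono with hmono | hanti
  · have hmem := forall_eventually_add_mul_mem_Ioo hc hfI (hmono.mono hIs) hf0 hfpos ha0 hapos hgum
    exact gumbel_deriv_of_tendsto_mul_deriv_div hfpos hapos fun t =>
      tendsto_mul_deriv_div_of_gumbel ordConnected_Ioo hfI (Or.inl (hmono.mono hIs)) hfpos hapos
        hgum one_pos ((hmem _).and (hmem _))
  · refine absurd (hanti.mono hIs) (not_antitoneOn_deriv_of_gumbel ordConnected_Ioo hfI hfpos
      hapos hgum fun u hu => eventually_add_mul_mem_Ioo hc ha0 hapos hu ?_)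
    simp only [mul_zero, add_zero]
    exact eventually_mem_nhdsWithin

theorem gumbel_condition_for_derivative
    (xstar : ENNReal) (hx : 0 < xstar) (f f' a : ℝ → ℝ)
    (F : Filter ℝ)
    (hF : F = if xstar = ⊤ then Filter.atTop
      else nhdsWithin xstar.toReal (Set.Iio xstar.toReal))
    (hf_nonneg : ∀ x : ℝ, 0 < x → ENNReal.ofReal x < xstar → 0 ≤ f x)
    (hf_anti : AntitoneOn f {x | 0 < x ∧ ENNReal.ofReal x < xstar})
    (hf' : ∀ x : ℝ, 0 < x → ENNReal.ofReal x < xstar → HasDerivAt f (f' x) x)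
    (hf'_mono : ∃ s ∈ F, MonotoneOn f' s ∨ AntitoneOn f' s)
    (ha_pos : ∀ᶠ x in F, 0 < a x)
    (ha_small : Tendsto (fun x => a x / x) F (nhds 0))
    (hgum : ∀ t : ℝ, Tendsto (fun x => f (x + a x * t) / f x) F
      (nhds (Real.exp (-t)))) :
    (∀ t : ℝ, Tendsto (fun x => f' (x + a x * t) / f' x) F
      (nhds (Real.exp (-t)))) ∧
    Tendsto (fun x => (-(f x) / a x) / f' x) F (nhds 1) := by
  obtain ⟨s, hs, hmono⟩ := hf'_mono
  by_cases hxt : xstar = ⊤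
  · rw [if_pos hxt] at hF
    subst hF
    have hlt : ∀ x : ℝ, ENNReal.ofReal x < xstar := fun x => hxt ▸ ENNReal.ofReal_lt_top
    exact gumbel_deriv_atTop hs hmono (fun x hx => hf_nonneg x hx (hlt x))
      (fun x hx => hf' x hx (hlt x)) ha_pos ha_small hgum
  · rw [if_neg hxt] at hF
    subst hF
    have hlt : ∀ x ∈ Ioo 0 xstar.toReal, ENNReal.ofReal x < xstar := fun x hx =>
      (ENNReal.ofReal_lt_iff_lt_toReal hx.1.le hxt).2 hx.2
    exact gumbel_deriv_nhdsLT (ENNReal.toReal_pos hx.ne' hxt) hs hmono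
      (fun x hx => hf_nonneg x hx.1 (hlt x hx)) (hf_anti.mono fun x hx => ⟨hx.1, hlt x hx⟩)
      (fun x hx => hf' x hx.1 (hlt x hx)) ha_pos ha_small hgum
end

section
/- Let ψ be a convex Archimedean generator (ψ(0)=1, ψ decreasing to 0, convex). If x ↦ 1 − ψ(1/x) is regularly varying at infinity with index −α, then α ≤ 1. -/
/-!
`1 - ψ` is concave and vanishes at `0`, so `(1 - ψ t) / t` is antitone on `(0, ∞)`. Hence for
`c ≥ 1` the ratio `(1 - ψ (1 / (c x))) / (1 - ψ (1 / x))` is at least `1 / c`, and passing to the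
limit gives `c ^ (-α) ≥ c ^ (-1)`, i.e. `α ≤ 1`.
-/

open Filter Set

theorem ConvexOn.div_mul_sub_le_sub {f : ℝ → ℝ} (hf : ConvexOn ℝ (Ici 0) f) {s t : ℝ}
    (hs : 0 < s) (hst : s ≤ t) : s / t * (f 0 - f t) ≤ f 0 - f s := by
  have ht : 0 < t := hs.trans_le hst
  have hslope := hf.secant_mono self_mem_Ici hs.le ht.le hs.ne' ht.ne' hst
  simp only [sub_zero] at hslope
  rw [div_le_div_iff₀ hs ht] at hslope
  rw [div_mul_eq_mul_div, div_le_iff₀ ht]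
  linarith

theorem generator_lt_one_of_pos {ψ : ℝ → ℝ} (hψ0 : ψ 0 = 1)
    (hanti : StrictAntiOn ψ {x | 0 ≤ x ∧ 0 < ψ x}) {t : ℝ} (ht : 0 < t) : ψ t < 1 := by
  rcases le_or_gt (ψ t) 0 with hneg | hpos
  · linarith
  · simpa [hψ0] using hanti ⟨le_rfl, by simp [hψ0]⟩ ⟨ht.le, hpos⟩ ht

theorem inv_le_generator_ratio {ψ : ℝ → ℝ} (hconv : ConvexOn ℝ (Ici 0) ψ) (hψ0 : ψ 0 = 1)
    (hanti : StrictAntiOn ψ {x | 0 ≤ x ∧ 0 < ψ x}) {c x : ℝ} (hc : 1 ≤ c) (hx : 0 < x) :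
    c⁻¹ ≤ (1 - ψ (1 / (c * x))) / (1 - ψ (1 / x)) := by
  have hden : 0 < 1 - ψ (1 / x) := sub_pos.2 (generator_lt_one_of_pos hψ0 hanti (by positivity))
  have hdrop := hconv.div_mul_sub_le_sub (s := 1 / (c * x)) (t := 1 / x) (by positivity)
    (one_div_le_one_div_of_le hx (le_mul_of_one_le_left hx.le hc))
  have hquot : 1 / (c * x) / (1 / x) = c⁻¹ := by field_simp
  rw [hψ0, hquot] at hdrop
  rwa [le_div_iff₀ hden]

theorem convex_generator_regvar_index_le_one_general
    (ψ : ℝ → ℝ) (α : ℝ)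
    (hconv : ConvexOn ℝ (Set.Ici 0) ψ)
    (hψ0 : ψ 0 = 1)
    (hanti : StrictAntiOn ψ {x | 0 ≤ x ∧ 0 < ψ x})
    (hRV : ∀ c > (0:ℝ), Tendsto
      (fun x => (1 - ψ (1 / (c * x))) / (1 - ψ (1 / x)))
      atTop (nhds (c ^ (-α)))) :
    α ≤ 1 := by
  have hbound : (2:ℝ) ^ (-1 : ℝ) ≤ 2 ^ (-α) := by
    rw [Real.rpow_neg_one]
    refine ge_of_tendsto (hRV 2 two_pos) ?_
    filter_upwards [eventually_gt_atTop 0] with x hx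
    exact inv_le_generator_ratio hconv hψ0 hanti one_le_two hx
  linarith [(Real.rpow_le_rpow_left_iff one_lt_two).mp hbound]

theorem convex_generator_regvar_index_le_one
    (ψ : ℝ → ℝ) (α : ℝ)
    (hcont : ContinuousOn ψ (Set.Ici 0))
    (hconv : ConvexOn ℝ (Set.Ici 0) ψ)
    (hψ0 : ψ 0 = 1)
    (hψ_lim : Tendsto ψ atTop (nhds 0))
    (hanti : StrictAntiOn ψ {x | 0 ≤ x ∧ 0 < ψ x})
    (hRV : ∀ c > (0:ℝ), Tendsto
      (fun x => (1 - ψ (1 / (c * x))) / (1 - ψ (1 / x)))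
      atTop (nhds (c ^ (-α)))) :
    α ≤ 1 :=
  convex_generator_regvar_index_le_one_general ψ α hconv hψ0 hanti hRV
end

section
/- Let C be a bivariate Archimedean copula with generator ψ, and let (U_1,U_2) ~ C with C(u_1,u_2) = ψ(ψ^{-1}(u_1)+ψ^{-1}(u_2)). If ψ is regularly varying at infinity with index −α for α ∈ [0,∞) and ψ is strict (ψ > 0 everywhere), then the lower tail dependence coefficient λ_l = lim_{q↓0} C(q,q)/q exists and equals 2^{−α}. -/
open Filter Set

theorem lower_tail_dependence_of_regvar_archimedean
    (ψ ψinv : ℝ → ℝ) (α : ℝ) (hα : 0 ≤ α)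
    (hcont : ContinuousOn ψ (Set.Ici 0))
    (hconv : ConvexOn ℝ (Set.Ici 0) ψ)
    (hψ0 : ψ 0 = 1)
    (hψ_lim : Tendsto ψ atTop (nhds 0))
    (hstrict : ∀ x ≥ (0:ℝ), 0 < ψ x)
    (hanti : StrictAntiOn ψ (Set.Ici 0))
    (hinv1 : ∀ x ≥ (0:ℝ), ψinv (ψ x) = x)
    (hinv2 : ∀ u ∈ Set.Ioc (0:ℝ) 1, ψ (ψinv u) = u)
    (hRV : ∀ c > (0:ℝ), Tendsto (fun x => ψ (c * x) / ψ x) atTop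
      (nhds (c ^ (-α)))) :
    Tendsto (fun q => ψ (ψinv q + ψinv q) / q)
      (nhdsWithin 0 (Set.Ioi 0)) (nhds ((2:ℝ) ^ (-α))) := by
  -- For q ∈ (0,1], there is x ≥ 0 with ψ x = q, and then ψinv q = x.
  have hexists : ∀ q ∈ Set.Ioc (0:ℝ) 1, ∃ x ≥ (0:ℝ), ψ x = q := by
    intro q hq
    obtain ⟨T, hTq, hT0⟩ :=
      ((hψ_lim.eventually_lt_const hq.1).and (eventually_ge_atTop (0:ℝ))).exists
    have hsub : Set.Icc (0:ℝ) T ⊆ Set.Ici 0 := Set.Icc_subset_Ici_self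
    have := intermediate_value_Icc' hT0 (hcont.mono hsub)
    have hqmem : q ∈ Set.Icc (ψ T) (ψ 0) := ⟨le_of_lt hTq, by rw [hψ0]; exact hq.2⟩
    obtain ⟨x, hx, hxq⟩ := this hqmem
    exact ⟨x, hx.1, hxq⟩
  -- ψinv tends to +∞ as q → 0⁺
  have h_top : Tendsto ψinv (nhdsWithin 0 (Set.Ioi 0)) atTop := by
    rw [tendsto_atTop]
    intro M
    set M' := max M 0 with hM'
    have hM'0 : (0:ℝ) ≤ M' := le_max_right _ _
    have hψM' : 0 < ψ M' := hstrict M' hM'0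
    have hmem : Set.Ioo (0:ℝ) (min (ψ M') 1) ∈ nhdsWithin (0:ℝ) (Set.Ioi 0) :=
      Ioo_mem_nhdsGT_of_mem ⟨le_refl 0, lt_min hψM' one_pos⟩
    filter_upwards [hmem] with q hq
    have hq1 : q ∈ Set.Ioc (0:ℝ) 1 :=
      ⟨hq.1, le_of_lt (lt_of_lt_of_le hq.2 (min_le_right _ _))⟩
    obtain ⟨x, hx0, hxq⟩ := hexists q hq1
    have hψinv : ψinv q = x := by rw [← hxq, hinv1 x hx0]
    have hqlt : q < ψ M' := lt_of_lt_of_le hq.2 (min_le_left _ _)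
    have hxM : M' < x := by
      by_contra h
      push_neg at h
      rcases eq_or_lt_of_le h with rfl | h'
      · exact absurd hxq.symm (ne_of_lt hqlt)
      · exact absurd (hxq ▸ hanti hx0 hM'0 h') (not_lt_of_ge (le_of_lt hqlt))
    rw [hψinv]
    exact le_of_lt (lt_of_le_of_lt (le_max_left M 0) hxM)
  have key : Tendsto (fun q => ψ (2 * ψinv q) / ψ (ψinv q))
      (nhdsWithin 0 (Set.Ioi 0)) (nhds ((2:ℝ) ^ (-α))) :=
    (hRV 2 two_pos).comp h_top
  refine key.congr' ?_
  have hmem : Set.Ioo (0:ℝ) 1 ∈ nhdsWithin (0:ℝ) (Set.Ioi 0) :=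
    Ioo_mem_nhdsGT_of_mem ⟨le_refl 0, one_pos⟩
  filter_upwards [hmem] with q hq
  have hq1 : q ∈ Set.Ioc (0:ℝ) 1 := ⟨hq.1, le_of_lt hq.2⟩
  rw [two_mul, hinv2 q hq1]
end
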